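/- arXiv:1405.0431 — 8 statements merged into one kernel-verified Lean document; each statement's English description precedes it below -/
import Mathlib

section
/- Let (Ω, F, μ) be a measure space and let 1 < p ≤ 2. Then for all f, g : Ω → ℂ with f, g ∈ L^p(μ), one has ‖f+g‖_p² + ‖f−g‖_p² ≥ 2‖f‖_p² + 2(p−1)‖g‖_p². -/
/-!
Pointwise, `‖a + b‖ ^ p + ‖a - b‖ ^ p ≥ 2 (‖a‖ ^ 2 + (p - 1) ‖b‖ ^ 2) ^ (p / 2)`. Since
`‖a ± b‖ ^ 2 = ‖a‖ ^ 2 + ‖b‖ ^ 2 ± 2 ⟪a, b⟫` and `t ↦ (A + t) ^ (p / 2) + (A - t) ^ (p / 2)` is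
concave and even, it suffices to treat `⟪a, b⟫ = ‖a‖ ‖b‖`, i.e. real numbers `x ≥ |y|`; scaling to
`x = 1` and Bernoulli's inequality reduce this to `(1 + r) ^ p + (1 - r) ^ p ≥ 2 + p (p - 1) r ^ 2`,
whose difference is even and convex on `[-1, 1]`.

Integrated, it bounds `((‖f + g‖_p ^ p + ‖f - g‖_p ^ p) / 2) ^ (2 / p)` below by
`‖ |f| ^ 2 + (p - 1) |g| ^ 2 ‖_{p/2}`, which the reverse Minkowski inequality in `L^{p/2}`
(`p / 2 ≤ 1`) bounds below by `‖f‖_p ^ 2 + (p - 1) ‖g‖_p ^ 2`. Convexity of `t ↦ t ^ (2 / p)`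
then gives `(‖f + g‖_p ^ 2 + ‖f - g‖_p ^ 2) / 2 ≥ ((‖f + g‖_p ^ p + ‖f - g‖_p ^ p) / 2) ^ (2 / p)`.
-/

open MeasureTheory Real Set
open scoped ENNReal

lemma Real.sq_rpow_div_two {x : ℝ} (hx : 0 ≤ x) (p : ℝ) : (x ^ 2) ^ (p / 2) = x ^ p := by
  rw [← rpow_natCast_mul hx]
  congr 1
  push_cast
  ring

lemma ENNReal.sq_rpow_div_two (x : ℝ≥0∞) (p : ℝ) : (x ^ 2) ^ (p / 2) = x ^ p := by
  rw [← ENNReal.rpow_natCast, ← ENNReal.rpow_mul]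
  congr 1
  push_cast
  ring

section TwoPoint

variable {p : ℝ}

lemma two_le_one_add_rpow_add_one_sub_rpow (hp : p ≤ 0) {r : ℝ} (hr : r ∈ Ioo (-1 : ℝ) 1) :
    2 ≤ (1 + r) ^ p + (1 - r) ^ p := by
  obtain ⟨hr₁, hr₂⟩ := hr
  have hplus : 0 < (1 + r) ^ p := rpow_pos_of_pos (by linarith) _
  have hminus : 0 < (1 - r) ^ p := rpow_pos_of_pos (by linarith) _
  have hprod : 1 ≤ (1 + r) ^ p * (1 - r) ^ p := by
    rw [← mul_rpow (by linarith) (by linarith)]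
    exact one_le_rpow_of_pos_of_le_one_of_nonpos (by nlinarith) (by nlinarith [sq_nonneg r]) hp
  nlinarith [sq_nonneg ((1 + r) ^ p - (1 - r) ^ p)]

lemma convexOn_one_add_rpow_add_one_sub_rpow_sub (hp₁ : 1 ≤ p) (hp₂ : p ≤ 2) :
    ConvexOn ℝ (Icc (-1) 1) fun r : ℝ ↦ (1 + r) ^ p + (1 - r) ^ p - p * (p - 1) * r ^ 2 := by
  refine convexOn_of_hasDerivWithinAt2_nonneg (convex_Icc _ _)
    (f' := fun r ↦ p * (1 + r) ^ (p - 1) - p * (1 - r) ^ (p - 1) - 2 * (p * (p - 1)) * r)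
    (f'' := fun r ↦ p * (p - 1) * ((1 + r) ^ (p - 2) + (1 - r) ^ (p - 2) - 2)) ?_ ?_ ?_ ?_
  · have hp₀ : 0 ≤ p := by linarith
    fun_prop (disch := assumption)
  all_goals
    simp only [interior_Icc]
    rintro r ⟨hr₁, hr₂⟩
  · have hplus := ((hasDerivAt_id r).const_add 1).rpow_const (p := p)
      (Or.inl (by linarith : (0 : ℝ) < 1 + r).ne')
    have hminus := ((hasDerivAt_id r).const_sub 1).rpow_const (p := p)
      (Or.inl (by linarith : (0 : ℝ) < 1 - r).ne')
    refine ((hplus.add hminus).sub ((hasDerivAt_pow 2 r).const_mul _)).hasDerivWithinAt.congr_deriv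
      ?_
    simp only [one_mul, id_eq, neg_mul, Nat.cast_ofNat, Nat.add_one_sub_one, pow_one]
    ring
  · have hplus := ((hasDerivAt_id r).const_add 1).rpow_const (p := p - 1)
      (Or.inl (by linarith : (0 : ℝ) < 1 + r).ne')
    have hminus := ((hasDerivAt_id r).const_sub 1).rpow_const (p := p - 1)
      (Or.inl (by linarith : (0 : ℝ) < 1 - r).ne')
    refine (((hplus.const_mul p).sub (hminus.const_mul p)).sub
      ((hasDerivAt_id r).const_mul _)).hasDerivWithinAt.congr_deriv ?_
    simp only [id, show p - 1 - 1 = p - 2 by ring]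
    ring
  · exact mul_nonneg (by nlinarith) (sub_nonneg.2 <|
      two_le_one_add_rpow_add_one_sub_rpow (by linarith) ⟨hr₁, hr₂⟩)

lemma two_add_mul_sq_le_one_add_rpow_add_one_sub_rpow (hp₁ : 1 ≤ p) (hp₂ : p ≤ 2) {r : ℝ}
    (hr : r ∈ Icc (-1 : ℝ) 1) : 2 + p * (p - 1) * r ^ 2 ≤ (1 + r) ^ p + (1 - r) ^ p := by
  have hmid := (convexOn_one_add_rpow_add_one_sub_rpow_sub hp₁ hp₂).2 hr
    (show -r ∈ Icc (-1 : ℝ) 1 from ⟨by linarith [hr.2], by linarith [hr.1]⟩)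
    (by norm_num : (0 : ℝ) ≤ 1 / 2) (by norm_num : (0 : ℝ) ≤ 1 / 2) (by norm_num)
  norm_num [← sub_eq_add_neg] at hmid
  linarith

lemma two_mul_one_add_mul_sq_rpow_le (hp₁ : 1 ≤ p) (hp₂ : p ≤ 2) {r : ℝ}
    (hr : r ∈ Icc (-1 : ℝ) 1) :
    2 * (1 + (p - 1) * r ^ 2) ^ (p / 2) ≤ (1 + r) ^ p + (1 - r) ^ p := by
  have hbernoulli := rpow_one_add_le_one_add_mul_self (s := (p - 1) * r ^ 2)
    (by nlinarith [sq_nonneg r]) (p := p / 2) (by linarith) (by linarith)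
  linear_combination 2 * hbernoulli + two_add_mul_sq_le_one_add_rpow_add_one_sub_rpow hp₁ hp₂ hr

lemma two_mul_sq_add_mul_sq_rpow_le (hp₁ : 1 ≤ p) (hp₂ : p ≤ 2) {x y : ℝ} (hyx : |y| ≤ x) :
    2 * (x ^ 2 + (p - 1) * y ^ 2) ^ (p / 2) ≤ (x + y) ^ p + (x - y) ^ p := by
  have hx : 0 ≤ x := (abs_nonneg y).trans hyx
  obtain ⟨r, hr, rfl⟩ : ∃ r ∈ Icc (-1 : ℝ) 1, y = x * r := by
    rcases hx.eq_or_lt with rfl | hx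
    · exact ⟨0, by norm_num, by simpa using hyx⟩
    · refine ⟨y / x, abs_le.1 ?_, by field_simp⟩
      rwa [abs_div, abs_of_pos hx, div_le_one hx]
  calc 2 * (x ^ 2 + (p - 1) * (x * r) ^ 2) ^ (p / 2)
      = x ^ p * (2 * (1 + (p - 1) * r ^ 2) ^ (p / 2)) := by
        rw [show x ^ 2 + (p - 1) * (x * r) ^ 2 = x ^ 2 * (1 + (p - 1) * r ^ 2) by ring,
          mul_rpow (by positivity) (by nlinarith [sq_nonneg r]), Real.sq_rpow_div_two hx]
        ring
    _ ≤ x ^ p * ((1 + r) ^ p + (1 - r) ^ p) := by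
        gcongr
        exact two_mul_one_add_mul_sq_rpow_le hp₁ hp₂ hr
    _ = (x + x * r) ^ p + (x - x * r) ^ p := by
        rw [mul_add, ← mul_rpow hx (by linarith [hr.1]), ← mul_rpow hx (by linarith [hr.2])]
        ring_nf

end TwoPoint

lemma concaveOn_add_rpow_add_sub_rpow {A s : ℝ} (hs₀ : 0 ≤ s) (hs₁ : s ≤ 1) :
    ConcaveOn ℝ (Icc (-A) A) fun t ↦ (A + t) ^ s + (A - t) ^ s := by
  have hshift := (Real.concaveOn_rpow hs₀ hs₁).translate_right A
  have h₁ := hshift.subset (s := Icc (-A) A)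
    (fun t ht ↦ show (0 : ℝ) ≤ A + t by linarith [ht.1]) (convex_Icc _ _)
  have h₂ := (hshift.comp_linearMap (-LinearMap.id)).subset (s := Icc (-A) A)
    (fun t ht ↦ show (0 : ℝ) ≤ A + -t by linarith [ht.2]) (convex_Icc _ _)
  exact (h₁.add h₂).congr fun t _ ↦ by simp [sub_eq_add_neg]

section ReverseMinkowski

theorem ENNReal.arith_mean2_rpow_le_rpow_arith_mean (w₁ w₂ z₁ z₂ : ℝ≥0∞) (hw : w₁ + w₂ = 1)
    {q : ℝ} (hq₀ : 0 < q) (hq₁ : q ≤ 1) :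
    w₁ * z₁ ^ q + w₂ * z₂ ^ q ≤ (w₁ * z₁ + w₂ * z₂) ^ q := by
  have h := ENNReal.rpow_arith_mean_le_arith_mean2_rpow w₁ w₂ (z₁ ^ q) (z₂ ^ q) hw
    (p := 1 / q) (by rw [le_div_iff₀ hq₀]; linarith)
  simp only [← ENNReal.rpow_mul, mul_one_div_cancel hq₀.ne', ENNReal.rpow_one] at h
  calc w₁ * z₁ ^ q + w₂ * z₂ ^ q = ((w₁ * z₁ ^ q + w₂ * z₂ ^ q) ^ (1 / q)) ^ q := by
        rw [← ENNReal.rpow_mul, one_div_mul_cancel hq₀.ne', ENNReal.rpow_one]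
    _ ≤ (w₁ * z₁ + w₂ * z₂) ^ q := ENNReal.rpow_le_rpow h hq₀.le

variable {α : Type*} [MeasurableSpace α] {μ : Measure α}

theorem ENNReal.lintegral_div_const_rpow (w : α → ℝ≥0∞) {c : ℝ≥0∞} (hc : c ≠ 0)
    {q : ℝ} (hq : 0 ≤ q) : ∫⁻ x, (w x / c) ^ q ∂μ = (∫⁻ x, w x ^ q ∂μ) / c ^ q := by
  simp_rw [ENNReal.div_rpow_of_nonneg _ _ hq, div_eq_mul_inv]
  exact lintegral_mul_const' _ _ (by simp [hc, hq])

theorem ENNReal.add_rpow_le_lintegral_add_rpow {u v : α → ℝ≥0∞} {a b : ℝ≥0∞} (ha₀ : a ≠ 0)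
    (hat : a ≠ ∞) (hb₀ : b ≠ 0) (hbt : b ≠ ∞) {q : ℝ} (hq₀ : 0 < q) (hq₁ : q ≤ 1)
    (hu : 1 ≤ ∫⁻ x, (u x / a) ^ q ∂μ) (hv : 1 ≤ ∫⁻ x, (v x / b) ^ q ∂μ) :
    (a + b) ^ q ≤ ∫⁻ x, (u x + v x) ^ q ∂μ := by
  have hab₀ : a + b ≠ 0 := by simp [ha₀]
  have habt : a + b ≠ ∞ := by simp [hat, hbt]
  -- `(u + v) / (a + b)` is a convex combination of `u / a` and `v / b`
  have hpoint : ∀ x, a / (a + b) * (u x / a) ^ q + b / (a + b) * (v x / b) ^ q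
      ≤ ((u x + v x) / (a + b)) ^ q := fun x ↦ by
    convert ENNReal.arith_mean2_rpow_le_rpow_arith_mean _ _ _ _
      (by rw [ENNReal.div_add_div_same, ENNReal.div_self hab₀ habt]) hq₀ hq₁ using 2
    simp only [div_eq_mul_inv]
    calc (u x + v x) * (a + b)⁻¹
        = (a * a⁻¹) * (u x * (a + b)⁻¹) + (b * b⁻¹) * (v x * (a + b)⁻¹) := by
          rw [ENNReal.mul_inv_cancel ha₀ hat, ENNReal.mul_inv_cancel hb₀ hbt]
          ring
      _ = a * (a + b)⁻¹ * (u x * a⁻¹) + b * (a + b)⁻¹ * (v x * b⁻¹) := by ring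
  have hI : 1 ≤ (∫⁻ x, (u x + v x) ^ q ∂μ) / (a + b) ^ q := calc
    1 = a / (a + b) * 1 + b / (a + b) * 1 := by
      rw [mul_one, mul_one, ENNReal.div_add_div_same, ENNReal.div_self hab₀ habt]
    _ ≤ a / (a + b) * ∫⁻ x, (u x / a) ^ q ∂μ + b / (a + b) * ∫⁻ x, (v x / b) ^ q ∂μ := by
      gcongr
    _ = ∫⁻ x, a / (a + b) * (u x / a) ^ q ∂μ + ∫⁻ x, b / (a + b) * (v x / b) ^ q ∂μ := by
      rw [lintegral_const_mul' _ _ (ENNReal.div_ne_top hat hab₀),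
        lintegral_const_mul' _ _ (ENNReal.div_ne_top hbt hab₀)]
    _ ≤ ∫⁻ x, (a / (a + b) * (u x / a) ^ q + b / (a + b) * (v x / b) ^ q) ∂μ :=
      le_lintegral_add _ _
    _ ≤ ∫⁻ x, ((u x + v x) / (a + b)) ^ q ∂μ := lintegral_mono hpoint
    _ = (∫⁻ x, (u x + v x) ^ q ∂μ) / (a + b) ^ q :=
      ENNReal.lintegral_div_const_rpow _ hab₀ hq₀.le
  rwa [ENNReal.le_div_iff_mul_le
    (Or.inl (ENNReal.rpow_pos_of_nonneg (pos_iff_ne_zero.2 hab₀) hq₀.le).ne')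
    (Or.inl (ENNReal.rpow_ne_top_of_nonneg hq₀.le habt)), one_mul] at hI

theorem ENNReal.lintegral_Lp_add_ge_of_le_one (u v : α → ℝ≥0∞) {q : ℝ}
    (hq₀ : 0 < q) (hq₁ : q ≤ 1) :
    (∫⁻ x, u x ^ q ∂μ) ^ (1 / q) + (∫⁻ x, v x ^ q ∂μ) ^ (1 / q)
      ≤ (∫⁻ x, (u x + v x) ^ q ∂μ) ^ (1 / q) := by
  set a := (∫⁻ x, u x ^ q ∂μ) ^ (1 / q) with ha
  set b := (∫⁻ x, v x ^ q ∂μ) ^ (1 / q) with hb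
  have hmono : ∀ w : α → ℝ≥0∞, w ≤ u + v →
      (∫⁻ x, w x ^ q ∂μ) ^ (1 / q) ≤ (∫⁻ x, (u x + v x) ^ q ∂μ) ^ (1 / q) :=
    fun w hw ↦ ENNReal.rpow_le_rpow (lintegral_mono fun x ↦ ENNReal.rpow_le_rpow (hw x) hq₀.le)
      (by positivity)
  have hmono_u : a ≤ _ := hmono u fun x ↦ le_self_add
  have hmono_v : b ≤ _ := hmono v fun x ↦ le_add_self
  rcases eq_or_ne a 0 with ha₀ | ha₀
  · rwa [ha₀, zero_add]
  rcases eq_or_ne b 0 with hb₀ | hb₀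
  · rwa [hb₀, add_zero]
  rcases eq_or_ne a ∞ with hat | hat
  · rw [hat, top_le_iff] at hmono_u
    exact hmono_u ▸ le_top
  rcases eq_or_ne b ∞ with hbt | hbt
  · rw [hbt, top_le_iff] at hmono_v
    exact hmono_v ▸ le_top
  have hnormalized : ∀ (w : α → ℝ≥0∞) (c : ℝ≥0∞), c ≠ 0 → c ≠ ∞ →
      c = (∫⁻ x, w x ^ q ∂μ) ^ (1 / q) → 1 ≤ ∫⁻ x, (w x / c) ^ q ∂μ := fun w c hc₀ hct hc ↦ by
    have hcq : c ^ q = ∫⁻ x, w x ^ q ∂μ := by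
      rw [hc, ← ENNReal.rpow_mul, one_div_mul_cancel hq₀.ne', ENNReal.rpow_one]
    rw [ENNReal.lintegral_div_const_rpow w hc₀ hq₀.le, ← hcq,
      ENNReal.div_self (ENNReal.rpow_pos_of_nonneg (pos_iff_ne_zero.2 hc₀) hq₀.le).ne'
        (ENNReal.rpow_ne_top_of_nonneg hq₀.le hct)]
  rw [one_div, ENNReal.le_rpow_inv_iff hq₀]
  exact ENNReal.add_rpow_le_lintegral_add_rpow ha₀ hat hb₀ hbt hq₀ hq₁
    (hnormalized u a ha₀ hat ha) (hnormalized v b hb₀ hbt hb)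

end ReverseMinkowski

lemma eLpNorm_ofReal_sq {Ω ε : Type*} [MeasurableSpace Ω] [ENorm ε] (μ : Measure Ω) (f : Ω → ε)
    {p : ℝ} (hp : 0 < p) :
    eLpNorm f (ENNReal.ofReal p) μ ^ 2 = (∫⁻ x, ‖f x‖ₑ ^ p ∂μ) ^ (2 / p) := by
  rw [eLpNorm_eq_lintegral_rpow_enorm_toReal (by simpa using hp) ENNReal.ofReal_ne_top,
    ENNReal.toReal_ofReal hp.le, ← ENNReal.rpow_natCast, ← ENNReal.rpow_mul]
  congr 1
  ring

section InnerProductSpace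

variable {E : Type*} [NormedAddCommGroup E] [InnerProductSpace ℝ E] {p : ℝ}

theorem two_mul_rpow_le_norm_add_rpow_add_norm_sub_rpow (hp₁ : 1 ≤ p) (hp₂ : p ≤ 2) (a b : E) :
    2 * (‖a‖ ^ 2 + (p - 1) * ‖b‖ ^ 2) ^ (p / 2) ≤ ‖a + b‖ ^ p + ‖a - b‖ ^ p := by
  wlog hba : ‖b‖ ≤ ‖a‖ generalizing a b
  · calc 2 * (‖a‖ ^ 2 + (p - 1) * ‖b‖ ^ 2) ^ (p / 2)
        ≤ 2 * (‖b‖ ^ 2 + (p - 1) * ‖a‖ ^ 2) ^ (p / 2) := by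
          gcongr 2 * ?_ ^ _
          nlinarith [mul_self_le_mul_self (norm_nonneg a) (le_of_not_ge hba)]
      _ ≤ ‖b + a‖ ^ p + ‖b - a‖ ^ p := this b a (le_of_not_ge hba)
      _ = ‖a + b‖ ^ p + ‖a - b‖ ^ p := by rw [add_comm b, norm_sub_rev]
  set A := ‖a‖ ^ 2 + ‖b‖ ^ 2
  set T := 2 * (‖a‖ * ‖b‖)
  have hTA : T ≤ A := by nlinarith [sq_nonneg (‖a‖ - ‖b‖)]
  have hinner : 2 * inner ℝ a b ∈ Icc (-T) T := by
    refine abs_le.1 ?_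
    rw [abs_mul, abs_two]
    linarith [abs_real_inner_le_norm a b]
  have hmin := (concaveOn_add_rpow_add_sub_rpow (A := A) (s := p / 2) (by linarith)
    (by linarith)).min_le_of_mem_Icc (x := -T) (y := T)
    ⟨by linarith, by linarith [hinner.1, hinner.2]⟩ ⟨by linarith [hinner.1, hinner.2], hTA⟩ hinner
  simp only [sub_neg_eq_add, ← sub_eq_add_neg, add_comm ((A - T) ^ (p / 2)), min_self] at hmin
  rw [show A + T = (‖a‖ + ‖b‖) ^ 2 by ring, show A - T = (‖a‖ - ‖b‖) ^ 2 by ring,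
    show A + 2 * inner ℝ a b = ‖a + b‖ ^ 2 by rw [norm_add_sq_real]; ring,
    show A - 2 * inner ℝ a b = ‖a - b‖ ^ 2 by rw [norm_sub_sq_real]; ring,
    Real.sq_rpow_div_two (by positivity), Real.sq_rpow_div_two (sub_nonneg.2 hba),
    Real.sq_rpow_div_two (norm_nonneg _), Real.sq_rpow_div_two (norm_nonneg _)] at hmin
  exact (two_mul_sq_add_mul_sq_rpow_le hp₁ hp₂ (by rwa [abs_norm])).trans hmin

theorem two_mul_enorm_rpow_le_enorm_add_rpow_add_enorm_sub_rpow (hp₁ : 1 ≤ p) (hp₂ : p ≤ 2)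
    (a b : E) :
    2 * (‖a‖ₑ ^ 2 + ENNReal.ofReal (p - 1) * ‖b‖ₑ ^ 2) ^ (p / 2)
      ≤ ‖a + b‖ₑ ^ p + ‖a - b‖ₑ ^ p := by
  have hp₀ : 0 ≤ p := by linarith
  have hb : 0 ≤ (p - 1) * ‖b‖ ^ 2 := by have := sq_nonneg ‖b‖; nlinarith
  simp only [← ofReal_norm]
  rw [← ENNReal.ofReal_pow (norm_nonneg _), ← ENNReal.ofReal_pow (norm_nonneg _),
    ← ENNReal.ofReal_mul (by linarith), ← ENNReal.ofReal_add (by positivity) hb,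
    ENNReal.ofReal_rpow_of_nonneg (by positivity) (by positivity),
    ENNReal.ofReal_rpow_of_nonneg (norm_nonneg _) hp₀,
    ENNReal.ofReal_rpow_of_nonneg (norm_nonneg _) hp₀,
    ← ENNReal.ofReal_add (by positivity) (by positivity), ← ENNReal.ofReal_ofNat 2,
    ← ENNReal.ofReal_mul (by norm_num)]
  exact ENNReal.ofReal_le_ofReal (two_mul_rpow_le_norm_add_rpow_add_norm_sub_rpow hp₁ hp₂ a b)

variable {Ω : Type*} [MeasurableSpace Ω] {μ : Measure Ω}

theorem two_mul_lintegral_le_lintegral_add_rpow_add_lintegral_sub_rpow (hp₁ : 1 ≤ p)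
    (hp₂ : p ≤ 2) {f g : Ω → E} (hf : AEStronglyMeasurable f μ) (hg : AEStronglyMeasurable g μ) :
    2 * ∫⁻ x, (‖f x‖ₑ ^ 2 + ENNReal.ofReal (p - 1) * ‖g x‖ₑ ^ 2) ^ (p / 2) ∂μ
      ≤ ∫⁻ x, ‖(f + g) x‖ₑ ^ p ∂μ + ∫⁻ x, ‖(f - g) x‖ₑ ^ p ∂μ := by
  rw [← lintegral_const_mul' _ _ ENNReal.ofNat_ne_top,
    ← lintegral_add_left' ((hf.add hg).enorm.pow_const p)]
  exact lintegral_mono fun x ↦ two_mul_enorm_rpow_le_enorm_add_rpow_add_enorm_sub_rpow hp₁ hp₂ _ _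

theorem two_mul_eLpNorm_sq_add_le_eLpNorm_add_sq_add_eLpNorm_sub_sq (hp₁ : 1 ≤ p) (hp₂ : p ≤ 2)
    {f g : Ω → E} (hf : AEStronglyMeasurable f μ) (hg : AEStronglyMeasurable g μ) :
    2 * eLpNorm f (ENNReal.ofReal p) μ ^ 2
        + 2 * ENNReal.ofReal (p - 1) * eLpNorm g (ENNReal.ofReal p) μ ^ 2
      ≤ eLpNorm (f + g) (ENNReal.ofReal p) μ ^ 2 + eLpNorm (f - g) (ENNReal.ofReal p) μ ^ 2 := by
  have hp₀ : 0 < p := by linarith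
  simp only [eLpNorm_ofReal_sq μ _ hp₀]
  set c := ENNReal.ofReal (p - 1)
  set Iadd := ∫⁻ x, ‖(f + g) x‖ₑ ^ p ∂μ
  set Isub := ∫⁻ x, ‖(f - g) x‖ₑ ^ p ∂μ
  set J := ∫⁻ x, (‖f x‖ₑ ^ 2 + c * ‖g x‖ₑ ^ 2) ^ (p / 2) ∂μ
  have hsuper : (∫⁻ x, ‖f x‖ₑ ^ p ∂μ) ^ (2 / p) + c * (∫⁻ x, ‖g x‖ₑ ^ p ∂μ) ^ (2 / p)
      ≤ J ^ (2 / p) := by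
    have h := ENNReal.lintegral_Lp_add_ge_of_le_one (μ := μ) (fun x ↦ ‖f x‖ₑ ^ 2)
      (fun x ↦ c * ‖g x‖ₑ ^ 2) (q := p / 2) (by positivity) (by linarith)
    simp only [ENNReal.mul_rpow_of_nonneg _ _ (by positivity : 0 ≤ p / 2),
      ENNReal.sq_rpow_div_two, show 1 / (p / 2) = 2 / p by field_simp] at h
    rwa [lintegral_const_mul' _ _
        (ENNReal.rpow_ne_top_of_nonneg (by positivity) ENNReal.ofReal_ne_top),
      ENNReal.mul_rpow_of_nonneg _ _ (by positivity), ← ENNReal.rpow_mul,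
      show p / 2 * (2 / p) = 1 by field_simp, ENNReal.rpow_one] at h
  have hmid : J ≤ 2⁻¹ * Iadd + 2⁻¹ * Isub := calc
    J = 2⁻¹ * (2 * J) := by
      rw [← mul_assoc, ENNReal.inv_mul_cancel two_ne_zero ENNReal.ofNat_ne_top, one_mul]
    _ ≤ 2⁻¹ * (Iadd + Isub) := by
      gcongr
      exact two_mul_lintegral_le_lintegral_add_rpow_add_lintegral_sub_rpow hp₁ hp₂ hf hg
    _ = 2⁻¹ * Iadd + 2⁻¹ * Isub := mul_add _ _ _
  have hconvex := ENNReal.rpow_arith_mean_le_arith_mean2_rpow _ _ Iadd Isub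
    ENNReal.inv_two_add_inv_two (p := 2 / p) (by rw [le_div_iff₀ hp₀]; linarith)
  calc 2 * (∫⁻ x, ‖f x‖ₑ ^ p ∂μ) ^ (2 / p) + 2 * c * (∫⁻ x, ‖g x‖ₑ ^ p ∂μ) ^ (2 / p)
      = 2 * ((∫⁻ x, ‖f x‖ₑ ^ p ∂μ) ^ (2 / p) + c * (∫⁻ x, ‖g x‖ₑ ^ p ∂μ) ^ (2 / p)) := by ring
    _ ≤ 2 * J ^ (2 / p) := by gcongr
    _ ≤ 2 * (2⁻¹ * Iadd + 2⁻¹ * Isub) ^ (2 / p) := by gcongr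
    _ ≤ 2 * (2⁻¹ * Iadd ^ (2 / p) + 2⁻¹ * Isub ^ (2 / p)) := by gcongr
    _ = Iadd ^ (2 / p) + Isub ^ (2 / p) := by
      rw [mul_add, ← mul_assoc, ← mul_assoc,
        ENNReal.mul_inv_cancel two_ne_zero ENNReal.ofNat_ne_top, one_mul, one_mul]

end InnerProductSpace

/-- **Ball–Carlen–Lieb convexity inequality**, commutative (measure-space) case,
`1 < p ≤ 2`: for `f, g ∈ L^p(μ)`,
`‖f+g‖_p² + ‖f−g‖_p² ≥ 2‖f‖_p² + 2(p−1)‖g‖_p²`. -/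
theorem bcl_convexity_le_two {Ω : Type*} [MeasurableSpace Ω] (μ : Measure Ω)
    (p : ℝ) (hp1 : 1 < p) (hp2 : p ≤ 2) (f g : Ω → ℂ)
    (hf : MemLp f (ENNReal.ofReal p) μ) (hg : MemLp g (ENNReal.ofReal p) μ) :
    (eLpNorm (f + g) (ENNReal.ofReal p) μ).toReal ^ 2
      + (eLpNorm (f - g) (ENNReal.ofReal p) μ).toReal ^ 2
    ≥ 2 * (eLpNorm f (ENNReal.ofReal p) μ).toReal ^ 2
      + 2 * (p - 1) * (eLpNorm g (ENNReal.ofReal p) μ).toReal ^ 2 := by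
  have h := two_mul_eLpNorm_sq_add_le_eLpNorm_add_sq_add_eLpNorm_sub_sq hp1.le hp2
    hf.aestronglyMeasurable hg.aestronglyMeasurable
  have := hf.eLpNorm_ne_top
  have := hg.eLpNorm_ne_top
  have := (hf.add hg).eLpNorm_ne_top
  have := (hf.sub hg).eLpNorm_ne_top
  have h' := ENNReal.toReal_mono (by finiteness) h
  rw [ENNReal.toReal_add (by finiteness) (by finiteness),
    ENNReal.toReal_add (by finiteness) (by finiteness)] at h'
  simpa only [ENNReal.toReal_mul, ENNReal.toReal_pow, ENNReal.toReal_ofNat,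
    ENNReal.toReal_ofReal (by linarith : 0 ≤ p - 1)] using h'
end

section
/- Let (Ω, F, μ) be a measure space and let 2 < p < ∞. Then for all f, g : Ω → ℂ with f, g ∈ L^p(μ), one has ‖f+g‖_p² + ‖f−g‖_p² ≤ 2‖f‖_p² + 2(p−1)‖g‖_p². -/
open MeasureTheory

/-!
Pointwise, `‖x + y‖ ^ p + ‖x - y‖ ^ p ≤ 2 (‖x‖² + (p - 1) ‖y‖²) ^ (p / 2)`: writing
`‖x ± y‖² = s ± u` with `|u| ≤ 2 ‖x‖ ‖y‖`, convexity of `t ↦ t ^ (p / 2)` reduces it to real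
`a = ‖x‖`, `b = ‖y‖`, and homogeneity to the two-point inequality
`((1 + t) ^ p + (1 - t) ^ p) / 2 ≤ (1 + (p - 1) t²) ^ (p / 2)` for `0 ≤ t ≤ 1`. For the latter,
with `m t = ((1 + t) ^ p + (1 - t) ^ p) / 2`, it suffices that `(m ^ (2 / p))' ≤ 2 (p - 1) t`;
by the mean value theorem this follows from the power-mean bound
`((1 + s) ^ (p - 2) + (1 - s) ^ (p - 2)) / 2 ≤ m s ^ ((p - 2) / p) ≤ m t ^ ((p - 2) / p)`
for `s ≤ t`.

Integrating the pointwise inequality bounds `‖f + g‖_p ^ p + ‖f - g‖_p ^ p` by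
`2 ‖‖f‖² + (p - 1) ‖g‖²‖_{p/2} ^ (p / 2)`, Minkowski's inequality in `L^{p/2}` bounds that norm by
`‖f‖_p² + (p - 1) ‖g‖_p²`, and `(a² + b²) ^ (p / 2) ≤ 2 ^ (p / 2 - 1) (a ^ p + b ^ p)` concludes.
-/

open Real Set
open scoped ENNReal

theorem ConvexOn.map_add_add_map_sub_le {f : ℝ → ℝ} {I : Set ℝ} (hf : ConvexOn ℝ I f)
    {s u v : ℝ} (huv : |u| ≤ v) (hl : s - v ∈ I) (hr : s + v ∈ I) :
    f (s + u) + f (s - u) ≤ f (s + v) + f (s - v) := by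
  rcases (abs_nonneg u).trans huv |>.eq_or_lt with hv | hv
  · obtain rfl : u = 0 := abs_eq_zero.mp (le_antisymm (hv ▸ huv) (abs_nonneg u))
    rw [← hv]
  obtain ⟨hu₁, hu₂⟩ := abs_le.mp huv
  have ha : 0 ≤ (v + u) / (2 * v) := by apply div_nonneg <;> linarith
  have hb : 0 ≤ (v - u) / (2 * v) := by apply div_nonneg <;> linarith
  have hab : (v + u) / (2 * v) + (v - u) / (2 * v) = 1 := by field_simp; ring
  have h₁ := hf.2 hr hl ha hb hab
  have h₂ := hf.2 hr hl hb ha (by rw [add_comm, hab])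
  simp only [smul_eq_mul] at h₁ h₂
  have e₁ : (v + u) / (2 * v) * (s + v) + (v - u) / (2 * v) * (s - v) = s + u := by
    field_simp; ring
  have e₂ : (v - u) / (2 * v) * (s + v) + (v + u) / (2 * v) * (s - v) = s - u := by
    field_simp; ring
  rw [e₁] at h₁
  rw [e₂] at h₂
  linear_combination h₁ + h₂ + (f (s + v) + f (s - v)) * hab

theorem add_rpow_div_two_le_add_rpow_div_two_rpow {x y r s : ℝ} (hx : 0 ≤ x) (hy : 0 ≤ y)
    (hr : 0 ≤ r) (hrs : r ≤ s) :
    (x ^ r + y ^ r) / 2 ≤ ((x ^ s + y ^ s) / 2) ^ (r / s) := by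
  rcases hr.eq_or_lt with rfl | hr₀
  · simp
  have hs : 0 < s := hr₀.trans_le hrs
  have key := (concaveOn_rpow (div_nonneg hr₀.le hs.le) ((div_le_one hs).mpr hrs)).2
    (mem_Ici.mpr (rpow_nonneg hx s)) (mem_Ici.mpr (rpow_nonneg hy s))
    (by norm_num : (0 : ℝ) ≤ 1 / 2) (by norm_num : (0 : ℝ) ≤ 1 / 2) (by norm_num)
  simp only [smul_eq_mul, ← rpow_mul hx, ← rpow_mul hy, mul_div_cancel₀ r hs.ne'] at key
  rw [show (x ^ s + y ^ s) / 2 = 1 / 2 * x ^ s + 1 / 2 * y ^ s by ring]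
  linarith

theorem monotoneOn_Icc_of_hasDerivAt_nonneg {f f' : ℝ → ℝ} {a b : ℝ}
    (hf : ∀ x ∈ Icc a b, HasDerivAt f (f' x) x) (hf' : ∀ x ∈ Icc a b, 0 ≤ f' x) :
    MonotoneOn f (Icc a b) :=
  monotoneOn_of_hasDerivWithinAt_nonneg (convex_Icc a b)
    (fun x hx ↦ (hf x hx).continuousAt.continuousWithinAt)
    (fun x hx ↦ (hf x (interior_subset hx)).hasDerivWithinAt)
    (fun x hx ↦ hf' x (interior_subset hx))

theorem hasDerivAt_one_add_rpow_add_one_sub_rpow {r : ℝ} (hr : 1 ≤ r) (x : ℝ) :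
    HasDerivAt (fun x ↦ (1 + x) ^ r + (1 - x) ^ r)
      (r * ((1 + x) ^ (r - 1) - (1 - x) ^ (r - 1))) x := by
  refine ((((hasDerivAt_id x).const_add 1).rpow_const (Or.inr hr)).add
    (((hasDerivAt_id x).const_sub 1).rpow_const (Or.inr hr))).congr_deriv ?_
  simp only [id]
  ring

theorem hasDerivAt_one_add_rpow_sub_one_sub_rpow {r : ℝ} (hr : 1 ≤ r) (x : ℝ) :
    HasDerivAt (fun x ↦ (1 + x) ^ r - (1 - x) ^ r)
      (r * ((1 + x) ^ (r - 1) + (1 - x) ^ (r - 1))) x := by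
  refine ((((hasDerivAt_id x).const_add 1).rpow_const (Or.inr hr)).sub
    (((hasDerivAt_id x).const_sub 1).rpow_const (Or.inr hr))).congr_deriv ?_
  simp only [id]
  ring

theorem one_add_rpow_sub_one_sub_rpow_le {p t : ℝ} (hp : 2 ≤ p) (ht : t ∈ Icc (0 : ℝ) 1) :
    (1 + t) ^ (p - 1) - (1 - t) ^ (p - 1)
      ≤ 2 * (p - 1) * t * (((1 + t) ^ p + (1 - t) ^ p) / 2) ^ ((p - 2) / p) := by
  set M := (((1 + t) ^ p + (1 - t) ^ p) / 2) ^ ((p - 2) / p)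
  have hmean : ∀ x ∈ Icc 0 t, ((1 + x) ^ (p - 2) + (1 - x) ^ (p - 2)) / 2 ≤ M := by
    intro x hx
    have hx₀ : 0 ≤ 1 + x := by linarith [hx.1]
    have hx₁ : 0 ≤ 1 - x := by linarith [hx.2, ht.2]
    refine (add_rpow_div_two_le_add_rpow_div_two_rpow (r := p - 2) (s := p) hx₀ hx₁
      (by linarith) (by linarith)).trans ?_
    refine rpow_le_rpow (by have := rpow_nonneg hx₀ p; have := rpow_nonneg hx₁ p; positivity)
      ?_ (div_nonneg (by linarith) (by linarith))
    have := (convexOn_rpow (by linarith : (1 : ℝ) ≤ p)).map_add_add_map_sub_le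
      (s := 1) (abs_le.mpr ⟨by linarith [hx.1, ht.1], hx.2⟩)
      (mem_Ici.mpr (by linarith [ht.2])) (mem_Ici.mpr (by linarith [ht.1]))
    linarith
  have hF : MonotoneOn (fun x ↦ 2 * (p - 1) * M * x - ((1 + x) ^ (p - 1) - (1 - x) ^ (p - 1)))
      (Icc 0 t) := by
    refine monotoneOn_Icc_of_hasDerivAt_nonneg
      (f' := fun x ↦ 2 * (p - 1) * M - (p - 1) * ((1 + x) ^ (p - 1 - 1) + (1 - x) ^ (p - 1 - 1)))
      (fun x _ ↦ ?_) (fun x hx ↦ ?_)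
    · exact (((hasDerivAt_id x).const_mul (2 * (p - 1) * M)).sub
        (hasDerivAt_one_add_rpow_sub_one_sub_rpow (by linarith) x)).congr_deriv (by ring)
    · rw [show p - 1 - 1 = p - 2 by ring]
      nlinarith [hmean x hx]
  have := hF (left_mem_Icc.mpr ht.1) (right_mem_Icc.mpr ht.1) ht.1
  simp only [mul_zero, add_zero, sub_zero, sub_self, one_rpow] at this
  linarith

theorem one_add_rpow_add_one_sub_rpow_le {p t : ℝ} (hp : 2 ≤ p) (ht : t ∈ Icc (0 : ℝ) 1) :
    ((1 + t) ^ p + (1 - t) ^ p) / 2 ≤ (1 + (p - 1) * t ^ 2) ^ (p / 2) := by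
  set m : ℝ → ℝ := fun x ↦ ((1 + x) ^ p + (1 - x) ^ p) / 2
  have hm : ∀ x ∈ Icc (0 : ℝ) 1, 0 < m x := fun x hx ↦ by
    have := rpow_pos_of_pos (by linarith [hx.1] : (0 : ℝ) < 1 + x) p
    have := rpow_nonneg (by linarith [hx.2] : (0 : ℝ) ≤ 1 - x) p
    positivity
  have hψ : MonotoneOn (fun x ↦ 1 + (p - 1) * x ^ 2 - m x ^ (2 / p)) (Icc 0 1) := by
    refine monotoneOn_Icc_of_hasDerivAt_nonneg
      (f' := fun x ↦ 2 * (p - 1) * x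
        - m x ^ (2 / p - 1) * ((1 + x) ^ (p - 1) - (1 - x) ^ (p - 1)))
      (fun x hx ↦ ?_) (fun x hx ↦ ?_)
    · have hmx : HasDerivAt m (p * ((1 + x) ^ (p - 1) - (1 - x) ^ (p - 1)) / 2) x :=
        (hasDerivAt_one_add_rpow_add_one_sub_rpow (by linarith) x).div_const 2
      refine ((((hasDerivAt_pow 2 x).const_mul (p - 1)).const_add 1).sub
        (hmx.rpow_const (Or.inl (hm x hx).ne'))).congr_deriv ?_
      field_simp
      ring
    · have hinv : m x ^ (2 / p - 1) * m x ^ ((p - 2) / p) = 1 := by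
        rw [← rpow_add (hm x hx), show 2 / p - 1 + (p - 2) / p = 0 by field_simp; ring, rpow_zero]
      rw [sub_nonneg]
      calc _ ≤ m x ^ (2 / p - 1) * (2 * (p - 1) * x * m x ^ ((p - 2) / p)) :=
            mul_le_mul_of_nonneg_left (one_add_rpow_sub_one_sub_rpow_le hp hx)
              (rpow_nonneg (hm x hx).le _)
        _ = 2 * (p - 1) * x * (m x ^ (2 / p - 1) * m x ^ ((p - 2) / p)) := by ring
        _ = 2 * (p - 1) * x := by rw [hinv, mul_one]
  have hψt := hψ (left_mem_Icc.mpr zero_le_one) ht ht.1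
  norm_num [m] at hψt
  calc m t = (m t ^ (2 / p)) ^ (p / 2) := by
        rw [← rpow_mul (hm t ht).le, div_mul_div_cancel₀ (by linarith), div_self two_ne_zero,
          rpow_one]
    _ ≤ _ := rpow_le_rpow (rpow_nonneg (hm t ht).le _) hψt (by linarith)

theorem add_rpow_add_abs_sub_rpow_le {p a b : ℝ} (hp : 2 ≤ p) (ha : 0 ≤ a) (hb : 0 ≤ b) :
    (a + b) ^ p + |a - b| ^ p ≤ 2 * (a ^ 2 + (p - 1) * b ^ 2) ^ (p / 2) := by
  wlog hba : b ≤ a generalizing a b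
  · refine (add_comm a b ▸ abs_sub_comm a b ▸ this hb ha (not_le.mp hba).le).trans ?_
    have hab := mul_self_le_mul_self ha (not_le.mp hba).le
    gcongr 2 * ?_ ^ _
    · exact add_nonneg (sq_nonneg b) (mul_nonneg (by linarith) (sq_nonneg a))
    · nlinarith [mul_le_mul_of_nonneg_left hab (by linarith : (0 : ℝ) ≤ p - 2)]
  rcases ha.eq_or_lt with rfl | ha₀
  · obtain rfl : b = 0 := le_antisymm hba hb
    simp [zero_rpow (by linarith : p ≠ 0), zero_rpow (by linarith : p / 2 ≠ 0)]
  have ht : b / a ∈ Icc (0 : ℝ) 1 := ⟨div_nonneg hb ha, (div_le_one ha₀).mpr hba⟩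
  have key := one_add_rpow_add_one_sub_rpow_le hp ht
  have hscale : ∀ x, 0 ≤ x → (a * x) ^ p = a ^ p * x ^ p := fun x hx ↦ mul_rpow ha hx
  calc (a + b) ^ p + |a - b| ^ p = a ^ p * ((1 + b / a) ^ p + (1 - b / a) ^ p) := by
        rw [abs_of_nonneg (by linarith), show a + b = a * (1 + b / a) by field_simp,
          show a - b = a * (1 - b / a) by field_simp, hscale _ (by linarith [ht.1]),
          hscale _ (by linarith [ht.2]), mul_add]
    _ ≤ a ^ p * (2 * (1 + (p - 1) * (b / a) ^ 2) ^ (p / 2)) := by gcongr; linarith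
    _ = 2 * (a ^ 2 + (p - 1) * b ^ 2) ^ (p / 2) := by
        rw [show a ^ 2 + (p - 1) * b ^ 2 = a ^ 2 * (1 + (p - 1) * (b / a) ^ 2) by field_simp,
          mul_rpow (by positivity) (by nlinarith [ht.1]), ← rpow_natCast a 2, ← rpow_mul ha]
        push_cast
        ring_nf

theorem norm_add_rpow_add_norm_sub_rpow_le {E : Type*} [NormedAddCommGroup E]
    [InnerProductSpace ℝ E] {p : ℝ} (hp : 2 ≤ p) (x y : E) :
    ‖x + y‖ ^ p + ‖x - y‖ ^ p ≤ (‖x‖ + ‖y‖) ^ p + |‖x‖ - ‖y‖| ^ p := by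
  have hsq : ∀ z : ℝ, 0 ≤ z → z ^ p = (z ^ 2) ^ (p / 2) := fun z hz ↦ by
    rw [← rpow_natCast, ← rpow_mul hz]
    ring_nf
  have key := (convexOn_rpow (by linarith : (1 : ℝ) ≤ p / 2)).map_add_add_map_sub_le
    (s := ‖x‖ ^ 2 + ‖y‖ ^ 2) (u := 2 * inner ℝ x y) (v := 2 * (‖x‖ * ‖y‖))
    (by rw [abs_mul, abs_two]; gcongr; exact abs_real_inner_le_norm x y)
    (mem_Ici.mpr (by nlinarith [sq_nonneg (‖x‖ - ‖y‖)]))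
    (mem_Ici.mpr (by positivity))
  rw [hsq _ (norm_nonneg _), hsq _ (norm_nonneg _), hsq _ (by positivity), hsq _ (abs_nonneg _),
    norm_add_sq_real, norm_sub_sq_real, sq_abs]
  convert key using 3 <;> ring

theorem norm_add_rpow_add_norm_sub_rpow_le_two_mul {E : Type*} [NormedAddCommGroup E]
    [InnerProductSpace ℝ E] {p : ℝ} (hp : 2 ≤ p) (x y : E) :
    ‖x + y‖ ^ p + ‖x - y‖ ^ p ≤ 2 * (‖x‖ ^ 2 + (p - 1) * ‖y‖ ^ 2) ^ (p / 2) :=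
  (norm_add_rpow_add_norm_sub_rpow_le hp x y).trans
    (add_rpow_add_abs_sub_rpow_le hp (norm_nonneg x) (norm_nonneg y))

namespace MeasureTheory

variable {Ω E : Type*} [MeasurableSpace Ω] {μ : Measure Ω} [NormedAddCommGroup E]

theorem eLpNorm_ofReal_rpow_eq_lintegral {p : ℝ} (hp : 0 < p) (f : Ω → E) :
    eLpNorm f (ENNReal.ofReal p) μ ^ p = ∫⁻ a, ‖f a‖ₑ ^ p ∂μ := by
  have := eLpNorm_nnreal_pow_eq_lintegral (f := f) (μ := μ) (p := p.toNNReal) (by simpa using hp)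
  rwa [Real.coe_toNNReal _ hp.le] at this

theorem eLpNorm_norm_sq_add_smul_norm_sq_le {p C : ℝ} (hp : 2 ≤ p) (hC : 0 ≤ C) {f g : Ω → E}
    (hf : AEStronglyMeasurable f μ) (hg : AEStronglyMeasurable g μ) :
    eLpNorm ((fun a ↦ ‖f a‖ ^ (2 : ℝ)) + C • fun a ↦ ‖g a‖ ^ (2 : ℝ)) (.ofReal (p / 2)) μ
      ≤ eLpNorm f (.ofReal p) μ ^ 2 + .ofReal C * eLpNorm g (.ofReal p) μ ^ 2 := by
  refine (eLpNorm_add_le (by fun_prop (disch := norm_num)) (by fun_prop (disch := norm_num))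
    (by simpa using (by linarith : 1 ≤ p / 2))).trans_eq ?_
  rw [eLpNorm_const_smul, eLpNorm_norm_rpow _ two_pos, eLpNorm_norm_rpow _ two_pos,
    ← ENNReal.ofReal_mul (by linarith), div_mul_cancel₀ p two_ne_zero, enorm_of_nonneg hC,
    ENNReal.rpow_two, ENNReal.rpow_two]

theorem eLpNorm_add_sq_add_eLpNorm_sub_sq_le {p C : ℝ} (hp : 2 ≤ p) (hC : 0 ≤ C)
    (h : ∀ x y : E, ‖x + y‖ ^ p + ‖x - y‖ ^ p ≤ 2 * (‖x‖ ^ 2 + C * ‖y‖ ^ 2) ^ (p / 2))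
    {f g : Ω → E} (hf : AEStronglyMeasurable f μ) (hg : AEStronglyMeasurable g μ) :
    eLpNorm (f + g) (.ofReal p) μ ^ 2 + eLpNorm (f - g) (.ofReal p) μ ^ 2
      ≤ 2 * (eLpNorm f (.ofReal p) μ ^ 2 + .ofReal C * eLpNorm g (.ofReal p) μ ^ 2) := by
  have hp₀ : 0 < p / 2 := by linarith
  set H : Ω → ℝ := (fun a ↦ ‖f a‖ ^ (2 : ℝ)) + C • fun a ↦ ‖g a‖ ^ (2 : ℝ)
  have hpoint : ∀ a, ‖(f + g) a‖ₑ ^ p + ‖(f - g) a‖ₑ ^ p ≤ 2 * ‖H a‖ₑ ^ (p / 2) := fun a ↦ by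
    have hH : 0 ≤ H a := by simp only [H, Pi.add_apply, Pi.smul_apply, smul_eq_mul]; positivity
    rw [enorm_of_nonneg hH, ← ofReal_norm, ← ofReal_norm, ENNReal.ofReal_rpow_of_nonneg
      (norm_nonneg _) (by linarith), ENNReal.ofReal_rpow_of_nonneg (norm_nonneg _)
      (by linarith), ENNReal.ofReal_rpow_of_nonneg hH hp₀.le, ← ENNReal.ofReal_add
      (by positivity) (by positivity), ← ENNReal.ofReal_ofNat 2, ← ENNReal.ofReal_mul zero_le_two]
    refine ENNReal.ofReal_le_ofReal ?_
    simpa [H, rpow_two] using h (f a) (g a)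
  have hint : eLpNorm (f + g) (.ofReal p) μ ^ p + eLpNorm (f - g) (.ofReal p) μ ^ p
      ≤ 2 * eLpNorm H (.ofReal (p / 2)) μ ^ (p / 2) := by
    rw [eLpNorm_ofReal_rpow_eq_lintegral (by linarith),
      eLpNorm_ofReal_rpow_eq_lintegral (by linarith), eLpNorm_ofReal_rpow_eq_lintegral hp₀,
      ← lintegral_const_mul' _ _ ENNReal.ofNat_ne_top]
    exact (le_lintegral_add _ _).trans (lintegral_mono hpoint)
  have hsq : ∀ z : ℝ≥0∞, (z ^ 2) ^ (p / 2) = z ^ p := fun z ↦ by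
    rw [← ENNReal.rpow_two, ← ENNReal.rpow_mul]
    ring_nf
  have htwo : (2 : ℝ≥0∞) ^ (p / 2 - 1) * 2 = 2 ^ (p / 2) := by
    conv_rhs => rw [← sub_add_cancel (p / 2) 1,
      ENNReal.rpow_add _ _ two_ne_zero ENNReal.ofNat_ne_top, ENNReal.rpow_one]
  rw [← ENNReal.rpow_le_rpow_iff hp₀]
  calc _ ≤ 2 ^ (p / 2 - 1) * (eLpNorm (f + g) (.ofReal p) μ ^ p
          + eLpNorm (f - g) (.ofReal p) μ ^ p) := by
        rw [← hsq, ← hsq (eLpNorm (f - g) _ μ)]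
        exact ENNReal.rpow_add_le_mul_rpow_add_rpow _ _ (by linarith)
    _ ≤ 2 ^ (p / 2 - 1) * (2 * eLpNorm H (.ofReal (p / 2)) μ ^ (p / 2)) := by gcongr
    _ ≤ 2 ^ (p / 2 - 1) * (2 * (eLpNorm f (.ofReal p) μ ^ 2
          + .ofReal C * eLpNorm g (.ofReal p) μ ^ 2) ^ (p / 2)) := by
        gcongr
        exact eLpNorm_norm_sq_add_smul_norm_sq_le hp hC hf hg
    _ = _ := by rw [← mul_assoc, htwo, ENNReal.mul_rpow_of_nonneg _ _ hp₀.le]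

end MeasureTheory

/-- **Ball–Carlen–Lieb convexity inequality**, reversed commutative (measure-space) case,
`2 < p < ∞`: for `f, g ∈ L^p(μ)`,
`‖f+g‖_p² + ‖f−g‖_p² ≤ 2‖f‖_p² + 2(p−1)‖g‖_p²`. -/
theorem bcl_convexity_gt_two {Ω : Type*} [MeasurableSpace Ω] (μ : Measure Ω)
    (p : ℝ) (hp : 2 < p) (f g : Ω → ℂ)
    (hf : MemLp f (ENNReal.ofReal p) μ) (hg : MemLp g (ENNReal.ofReal p) μ) :
    (eLpNorm (f + g) (ENNReal.ofReal p) μ).toReal ^ 2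
      + (eLpNorm (f - g) (ENNReal.ofReal p) μ).toReal ^ 2
    ≤ 2 * (eLpNorm f (ENNReal.ofReal p) μ).toReal ^ 2
      + 2 * (p - 1) * (eLpNorm g (ENNReal.ofReal p) μ).toReal ^ 2 := by
  have hbcl := eLpNorm_add_sq_add_eLpNorm_sub_sq_le hp.le (by linarith : 0 ≤ p - 1)
    (norm_add_rpow_add_norm_sub_rpow_le_two_mul hp.le) hf.1 hg.1
  have hfin : 2 * (eLpNorm f (.ofReal p) μ ^ 2
      + .ofReal (p - 1) * eLpNorm g (.ofReal p) μ ^ 2) ≠ ⊤ := by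
    simp [hf.eLpNorm_ne_top, hg.eLpNorm_ne_top, ENNReal.mul_eq_top]
  have := ENNReal.toReal_mono hfin hbcl
  simp [ENNReal.toReal_add, ENNReal.toReal_ofReal (by linarith : 0 ≤ p - 1), ENNReal.mul_eq_top,
    hf.eLpNorm_ne_top, hg.eLpNorm_ne_top, (hf.add hg).eLpNorm_ne_top,
    (hf.sub hg).eLpNorm_ne_top] at this
  linarith
end

section
/- Let I ⊆ ℝ be an open interval and let f : I → ℝ be continuous. For t ∈ I define the second-order pseudo-derivative D²f(t) := liminf_{h→0⁺} (f(t+h) + f(t−h) − 2f(t))/h². If D²f(t) ≥ 0 for every t ∈ I, then f is convex on I. -/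
open Filter Set Topology

/-!
Adding `ε t²` turns `D²f ≥ 0` into `D²(f + ε t²) ≥ 2ε > 0`, so the symmetric second difference of
`f + ε t²` is positive for all small `h > 0`. Such a function has no strict interior maximum after
subtracting a chord, hence lies below its chords. Letting `ε → 0` gives the convexity of `f`.
-/

def secondSymmDiff (g : ℝ → ℝ) (t h : ℝ) : ℝ :=
  g (t + h) + g (t - h) - 2 * g t

noncomputable def pseudoSecondDeriv (f : ℝ → ℝ) (t : ℝ) : EReal :=
  liminf (fun h : ℝ => ((secondSymmDiff f t h / h ^ 2 : ℝ) : EReal)) (𝓝[>] 0)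

lemma le_max_of_frequently_secondSymmDiff_pos {φ : ℝ → ℝ} {x y : ℝ}
    (hφ : ContinuousOn φ (Icc x y))
    (hpos : ∀ t ∈ Ioo x y, ∃ᶠ h in 𝓝[>] 0, 0 < secondSymmDiff φ t h) :
    ∀ s ∈ Icc x y, φ s ≤ max (φ x) (φ y) := by
  intro s hs
  obtain ⟨t₀, ht₀, hmax⟩ := isCompact_Icc.exists_isMaxOn ⟨s, hs⟩ hφ
  suffices φ t₀ ≤ max (φ x) (φ y) from (hmax hs).trans this
  by_contra! hlt
  have ht₀' : t₀ ∈ Ioo x y := by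
    refine ⟨ht₀.1.lt_of_ne ?_, ht₀.2.lt_of_ne ?_⟩ <;> rintro rfl <;> simp at hlt
  have hnonpos : ∀ᶠ h in 𝓝[>] 0, secondSymmDiff φ t₀ h ≤ 0 := by
    filter_upwards [Ioo_mem_nhdsGT (lt_min (sub_pos.2 ht₀'.1) (sub_pos.2 ht₀'.2))]
      with h ⟨hh₀, hh⟩
    have hh₁ := hh.trans_le (min_le_left _ _)
    have hh₂ := hh.trans_le (min_le_right _ _)
    have hright : φ (t₀ + h) ≤ φ t₀ := hmax ⟨by linarith [ht₀.1], by linarith⟩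
    have hleft : φ (t₀ - h) ≤ φ t₀ := hmax ⟨by linarith, by linarith [ht₀.2]⟩
    unfold secondSymmDiff
    linarith
  obtain ⟨h, hpos, hle⟩ := ((hpos t₀ ht₀').and_eventually hnonpos).exists
  exact hpos.not_ge hle

lemma convexOn_of_frequently_secondSymmDiff_pos {I : Set ℝ} {g : ℝ → ℝ} (hI : Convex ℝ I)
    (hg : ContinuousOn g I) (hpos : ∀ t ∈ I, ∃ᶠ h in 𝓝[>] 0, 0 < secondSymmDiff g t h) :
    ConvexOn ℝ I g := by
  refine LinearOrder.convexOn_of_lt hI fun x hx y hy hxy a b ha hb hab => ?_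
  have hIcc : Icc x y ⊆ I := hI.ordConnected.out hx hy
  -- `(y - x)` times the gap between `g` and its chord over `[x, y]`
  let φ s := (y - x) * g s - ((y - s) * g x + (s - x) * g y)
  have hφ_diff (t h : ℝ) : secondSymmDiff φ t h = (y - x) * secondSymmDiff g t h := by
    simp only [φ, secondSymmDiff]; ring
  have hφ_cont : ContinuousOn φ (Icc x y) := by
    have := hg.mono hIcc
    fun_prop
  have hφ : ∀ s ∈ Icc x y, φ s ≤ max (φ x) (φ y) := by
    refine le_max_of_frequently_secondSymmDiff_pos hφ_cont fun t ht => ?_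
    refine (hpos t (hIcc (Ioo_subset_Icc_self ht))).mono fun h hh => ?_
    rw [hφ_diff]
    exact mul_pos (sub_pos.2 hxy) hh
  have hφ_ends : max (φ x) (φ y) = 0 := by simp only [φ]; ring_nf; simp
  have hφ_mid : φ (a • x + b • y) = (y - x) * (g (a • x + b • y) - (a • g x + b • g y)) := by
    simp only [φ, smul_eq_mul]; linear_combination (y * g x - x * g y) * hab
  have hz := hφ _ <|
    convex_Icc x y (left_mem_Icc.2 hxy.le) (right_mem_Icc.2 hxy.le) ha.le hb.le hab
  rw [hφ_ends, hφ_mid] at hz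
  exact sub_nonpos.1 (nonpos_of_mul_nonpos_right hz (sub_pos.2 hxy))

lemma convexOn_of_forall_pos_convexOn_add_mul {E : Type*} [AddCommMonoid E] [Module ℝ E]
    {s : Set E} {f q : E → ℝ} (hconv : ∀ ε > 0, ConvexOn ℝ s fun x => f x + ε * q x) :
    ConvexOn ℝ s f := by
  refine ⟨(hconv 1 one_pos).1, fun x hx y hy a b ha hb hab => ?_⟩
  set C := a * q x + b * q y - q (a • x + b • y)
  have hle : ∀ᶠ ε in 𝓝[>] (0 : ℝ), f (a • x + b • y) - (a • f x + b • f y) ≤ ε * C := by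
    filter_upwards [self_mem_nhdsWithin] with ε hε
    have := (hconv ε hε).2 hx hy ha hb hab
    simp only [smul_eq_mul] at this ⊢
    linarith
  have hlim : Tendsto (fun ε => ε * C) (𝓝[>] 0) (𝓝 0) :=
    ((continuous_id.mul continuous_const).tendsto' 0 0 (zero_mul C)).mono_left
      nhdsWithin_le_nhds
  exact sub_nonpos.1 (ge_of_tendsto hlim hle)

lemma eventually_secondSymmDiff_add_mul_sq_pos {f : ℝ → ℝ} {t ε : ℝ}
    (hD2 : 0 ≤ pseudoSecondDeriv f t) (hε : 0 < ε) :
    ∀ᶠ h in 𝓝[>] 0, 0 < secondSymmDiff (fun s => f s + ε * s ^ 2) t h := by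
  have hlt : ((-(2 * ε) : ℝ) : EReal) < pseudoSecondDeriv f t :=
    (EReal.coe_lt_coe_iff.2 (by linarith)).trans_le hD2
  filter_upwards [eventually_lt_of_lt_liminf hlt, self_mem_nhdsWithin] with h hh (hh₀ : 0 < h)
  rw [EReal.coe_lt_coe_iff, lt_div_iff₀ (by positivity)] at hh
  have hsq : secondSymmDiff (fun s => f s + ε * s ^ 2) t h =
      secondSymmDiff f t h + 2 * ε * h ^ 2 := by
    simp only [secondSymmDiff]; ring
  rw [hsq]
  linarith

theorem convex_of_pseudo_second_deriv_nonneg_general (I : Set ℝ)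
    (hI_conv : Convex ℝ I) (f : ℝ → ℝ) (hf : ContinuousOn f I)
    (hD2 : ∀ t ∈ I,
      (0 : EReal) ≤ liminf
        (fun h : ℝ => (((f (t + h) + f (t - h) - 2 * f t) / h ^ 2 : ℝ) : EReal))
        (nhdsWithin 0 (Set.Ioi 0))) :
    ConvexOn ℝ I f :=
  convexOn_of_forall_pos_convexOn_add_mul (q := fun s => s ^ 2) fun _ hε =>
    convexOn_of_frequently_secondSymmDiff_pos hI_conv (hf.add (by fun_prop)) fun t ht =>
      (eventually_secondSymmDiff_add_mul_sq_pos (hD2 t ht) hε).frequently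

/-- If a continuous function `f` on an open interval `I ⊆ ℝ` has nonnegative second-order
pseudo-derivative `D²f(t) = liminf_{h→0⁺} (f(t+h) + f(t−h) − 2f(t))/h²` at every point of `I`
(the `liminf` being computed in `EReal` to handle unbounded difference quotients),
then `f` is convex on `I`. An open interval is a convex open subset of `ℝ`. -/
theorem convex_of_pseudo_second_deriv_nonneg (I : Set ℝ) (hI_open : IsOpen I)
    (hI_conv : Convex ℝ I) (f : ℝ → ℝ) (hf : ContinuousOn f I)
    (hD2 : ∀ t ∈ I,
      (0 : EReal) ≤ liminf
        (fun h : ℝ => (((f (t + h) + f (t - h) - 2 * f t) / h ^ 2 : ℝ) : EReal))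
        (nhdsWithin 0 (Set.Ioi 0))) :
    ConvexOn ℝ I f :=
  convex_of_pseudo_second_deriv_nonneg_general I hI_conv f hf hD2
end

section
/- Let n ≥ 1, let a, b be Hermitian n×n complex matrices, and let s > 0. Set R := (s·I + a²)⁻¹ and let |a| denote the positive semidefinite square root of a². Then Re tr((a R b)²) ≤ Re tr((|a| R b)²), i.e. Re tr[a(s+a²)⁻¹ b a(s+a²)⁻¹ b] ≤ Re tr[|a|(s+a²)⁻¹ b |a|(s+a²)⁻¹ b]. -/
open Matrix
open scoped ComplexOrder

/-!
Write `a = U diag(λ) U*`. Both `a R` and `|a| R` are functions of `a`, namely `f(a)` and `|f|(a)`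
with `f x = x / (s + x²)`. With `c = U* b U`, which is Hermitian, one has
`Re tr((g(a) b)²) = ∑ᵢⱼ g(λᵢ) g(λⱼ) |cᵢⱼ|²`, and replacing `g` by `|g|` can only increase each term.
-/

namespace Matrix

variable {n 𝕜 : Type*} [Fintype n] [DecidableEq n] [RCLike 𝕜]

theorem re_trace_diagonal_mul_mul_self {c : Matrix n n 𝕜} (hc : c.IsHermitian) (g : n → ℝ) :
    RCLike.re (diagonal (fun i ↦ (g i : 𝕜)) * c * (diagonal (fun i ↦ (g i : 𝕜)) * c)).trace
      = ∑ i, ∑ j, g i * g j * ‖c i j‖ ^ 2 := by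
  have hentry (i j : n) :
      (diagonal (fun i ↦ (g i : 𝕜)) * c * diagonal (fun i ↦ (g i : 𝕜))) i j = g i * c i j * g j := by
    simp [mul_diagonal, diagonal_mul]
  simp only [trace, diag_apply, ← mul_assoc, mul_apply, hentry, map_sum]
  refine Finset.sum_congr rfl fun i _ ↦ Finset.sum_congr rfl fun j _ ↦ ?_
  rw [← hc.apply i j, norm_star, RCLike.star_def, mul_right_comm (g i : 𝕜), mul_assoc,
    RCLike.conj_mul]
  norm_cast

theorem IsHermitian.re_trace_cfc_mul_mul_self_eq_sum {a b : Matrix n n 𝕜} (ha : a.IsHermitian)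
    (hb : b.IsHermitian) (f : ℝ → ℝ) :
    RCLike.re (cfc f a * b * (cfc f a * b)).trace
      = ∑ i, ∑ j, f (ha.eigenvalues i) * f (ha.eigenvalues j) *
          ‖(star (ha.eigenvectorUnitary : Matrix n n 𝕜) * b * ha.eigenvectorUnitary) i j‖ ^ 2 := by
  set U : Matrix n n 𝕜 := (ha.eigenvectorUnitary : Matrix n n 𝕜)
  set D : Matrix n n 𝕜 := diagonal fun i ↦ (f (ha.eigenvalues i) : 𝕜)
  have hc : (star U * b * U).IsHermitian := isHermitian_conjTranspose_mul_mul U hb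
  have hcyc : (U * D * star U * b * (U * D * star U * b)).trace
      = (D * (star U * b * U) * (D * (star U * b * U))).trace := by
    rw [show U * D * star U * b * (U * D * star U * b) = U * (D * star U * b * U * D * star U * b)
      by simp only [mul_assoc], trace_mul_comm]
    simp only [mul_assoc]
  rw [ha.cfc_eq, IsHermitian.cfc, Unitary.conjStarAlgAut_apply]
  exact hcyc ▸ re_trace_diagonal_mul_mul_self hc _

theorem IsHermitian.re_trace_cfc_mul_mul_self_le_abs {a b : Matrix n n 𝕜} (ha : a.IsHermitian)
    (hb : b.IsHermitian) (f : ℝ → ℝ) :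
    RCLike.re (cfc f a * b * (cfc f a * b)).trace
      ≤ RCLike.re (cfc (fun x ↦ |f x|) a * b * (cfc (fun x ↦ |f x|) a * b)).trace := by
  rw [ha.re_trace_cfc_mul_mul_self_eq_sum hb, ha.re_trace_cfc_mul_mul_self_eq_sum hb]
  refine Finset.sum_le_sum fun i _ ↦ Finset.sum_le_sum fun j _ ↦ ?_
  exact mul_le_mul_of_nonneg_right (abs_mul (f _) (f _) ▸ le_abs_self _) (sq_nonneg _)

theorem IsHermitian.inv_smul_one_add_mul_self_eq_cfc {a : Matrix n n 𝕜} (ha : a.IsHermitian)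
    {s : ℝ} (hs : 0 < s) :
    ((s : 𝕜) • 1 + a * a)⁻¹ = cfc (fun x ↦ (s + x ^ 2)⁻¹) a := by
  rw [cfc_inv (fun x ↦ s + x ^ 2) a fun x _ ↦ by positivity, cfc_const_add s (· ^ 2) a,
    cfc_pow (fun x ↦ x) 2 a, cfc_id' ℝ a, nonsing_inv_eq_ringInverse,
    Algebra.algebraMap_eq_smul_one, sq, RCLike.real_smul_eq_coe_smul (K := 𝕜)]

open scoped MatrixOrder in
theorem IsHermitian.eq_cfc_abs_of_mul_self_eq {a m : Matrix n n 𝕜} (ha : a.IsHermitian)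
    (hm : m.PosSemidef) (h : m * m = a * a) : m = cfc (fun x : ℝ ↦ |x|) a := by
  have habs_sq : cfc (fun x : ℝ ↦ |x|) a * cfc (fun x : ℝ ↦ |x|) a = a * a :=
    calc cfc (fun x : ℝ ↦ |x|) a * cfc (fun x : ℝ ↦ |x|) a
        = cfc (fun x : ℝ ↦ |x| * |x|) a := (cfc_mul ..).symm
      _ = cfc (fun x : ℝ ↦ x * x) a := by simp_rw [abs_mul_abs_self]
      _ = a * a := by rw [cfc_mul .., cfc_id' ℝ a]
  exact (CFC.mul_self_eq_mul_self_iff m _ hm.nonneg (cfc_nonneg fun x _ ↦ abs_nonneg x)).mp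
    (h.trans habs_sq.symm)

end Matrix

theorem trace_mono_abs_general {n : ℕ} (a b : Matrix (Fin n) (Fin n) ℂ)
    (ha : a.IsHermitian) (hb : b.IsHermitian) (s : ℝ) (hs : 0 < s)
    (absa : Matrix (Fin n) (Fin n) ℂ) (habs_pos : absa.PosSemidef)
    (habs_sq : absa * absa = a * a) :
    (((a * ((s : ℂ) • (1 : Matrix (Fin n) (Fin n) ℂ) + a * a)⁻¹ * b)
        * (a * ((s : ℂ) • (1 : Matrix (Fin n) (Fin n) ℂ) + a * a)⁻¹ * b)).trace).re
    ≤ (((absa * ((s : ℂ) • (1 : Matrix (Fin n) (Fin n) ℂ) + a * a)⁻¹ * b)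
        * (absa * ((s : ℂ) • (1 : Matrix (Fin n) (Fin n) ℂ) + a * a)⁻¹ * b)).trace).re := by
  have hR : ((s : ℂ) • 1 + a * a)⁻¹ = cfc (fun x ↦ (s + x ^ 2)⁻¹) a :=
    ha.inv_smul_one_add_mul_self_eq_cfc hs
  have hcont (g : ℝ → ℝ) : ContinuousOn g (spectrum ℝ a) := a.finite_real_spectrum.continuousOn g
  set f : ℝ → ℝ := fun x ↦ x * (s + x ^ 2)⁻¹
  have hf : a * ((s : ℂ) • 1 + a * a)⁻¹ = cfc f a := by
    rw [hR, cfc_mul (fun x ↦ x) _ a (hg := hcont _), cfc_id' ℝ a]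
  have habs_f : (fun x ↦ |f x|) = fun x ↦ |x| * (s + x ^ 2)⁻¹ :=
    funext fun x ↦ by rw [abs_mul, abs_inv, abs_of_pos (by positivity : 0 < s + x ^ 2)]
  have hg : absa * ((s : ℂ) • 1 + a * a)⁻¹ = cfc (fun x ↦ |f x|) a := by
    rw [hR, ha.eq_cfc_abs_of_mul_self_eq habs_pos habs_sq, habs_f,
      cfc_mul (fun x ↦ |x|) _ a (hg := hcont _)]
  rw [hf, hg]
  exact ha.re_trace_cfc_mul_mul_self_le_abs hb f

/-- Key monotonicity claim in the proof of Lemma 2.1: for Hermitian `a, b`, `s > 0`,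
`R = (s·I + a²)⁻¹` and `|a|` the positive semidefinite square root of `a²` (given here as
any positive semidefinite matrix `absa` with `absa * absa = a * a`),
`Re tr((a R b)²) ≤ Re tr((|a| R b)²)`. -/
theorem trace_mono_abs {n : ℕ} (hn : 1 ≤ n) (a b : Matrix (Fin n) (Fin n) ℂ)
    (ha : a.IsHermitian) (hb : b.IsHermitian) (s : ℝ) (hs : 0 < s)
    (absa : Matrix (Fin n) (Fin n) ℂ) (habs_pos : absa.PosSemidef)
    (habs_sq : absa * absa = a * a) :
    (((a * ((s : ℂ) • (1 : Matrix (Fin n) (Fin n) ℂ) + a * a)⁻¹ * b)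
        * (a * ((s : ℂ) • (1 : Matrix (Fin n) (Fin n) ℂ) + a * a)⁻¹ * b)).trace).re
    ≤ (((absa * ((s : ℂ) • (1 : Matrix (Fin n) (Fin n) ℂ) + a * a)⁻¹ * b)
        * (absa * ((s : ℂ) • (1 : Matrix (Fin n) (Fin n) ℂ) + a * a)⁻¹ * b)).trace).re :=
  trace_mono_abs_general a b ha hb s hs absa habs_pos habs_sq
end

section
/- Let α be a type and let x be an element of the group algebra ℂ[F], where F is the free group on α, i.e. x is a finitely supported function x : F → ℂ with convolution product. Fix k ≥ 0 and suppose that every g in the support of x has reduced word length exactly k. Then ∑_{g ∈ F} |(x* · x)(g)|² ≤ (k+1) · (∑_{g ∈ F} |x(g)|²)², where x* is the adjoint defined by x*(g) = conj(x(g⁻¹)) and · is the convolution product of the group algebra. -/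
/-!
By the convolution formula `(x* x)(g) = ∑ₚ conj (x p) x (p g)` and Cauchy–Schwarz for each `g`,
the left side is at most `∑_{p,r} N(p,r) |x p|² |x r|²`, where `N(p,r)` counts the `g` with
`p g` and `r g⁻¹` in the support of `x`. In a free group, `|p g| = |p|` forces `g` to cancel
exactly its first half against the end of `p`, and likewise `|r g⁻¹| = |r|` forces the second
half of `g` to be the end of `r`. So `g` is determined by `p`, `r` and `|g| = 2j` with
`0 ≤ j ≤ k`, whence `N(p,r) ≤ k + 1`.
-/

open Finset ComplexConjugate

namespace FreeGroup

variable {α : Type*} [DecidableEq α]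

theorem IsReduced.exists_reduce_append_eq {L₁ L₂ : List (α × Bool)} (h₁ : IsReduced L₁)
    (h₂ : IsReduced L₂) :
    ∃ A B C, L₁ = A ++ invRev B ∧ L₂ = B ++ C ∧ reduce (L₁ ++ L₂) = A ++ C := by
  induction L₁ using List.reverseRecOn generalizing L₂ with
  | nil => exact ⟨[], [], L₂, by simp [invRev], rfl, by simpa using h₂.reduce_eq⟩
  | append_singleton U u ih =>
    rcases L₂ with _ | ⟨⟨a, b⟩, V⟩
    · exact ⟨U ++ [u], [], [], by simp [invRev], rfl, by simpa using h₁.reduce_eq⟩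
    by_cases hu : u = (a, !b)
    · obtain ⟨A, B, C, rfl, rfl, hUV⟩ :=
        ih (h₁.infix (List.prefix_append _ _).isInfix) (h₂.infix (List.suffix_cons _ _).isInfix)
      refine ⟨A, (a, b) :: B, C, by simp [hu, invRev], rfl, ?_⟩
      rw [← hUV, hu, List.append_assoc, List.singleton_append]
      exact reduce.Step.eq .not_rev
    · refine ⟨U ++ [u], [], (a, b) :: V, by simp [invRev], rfl, IsReduced.reduce_eq ?_⟩
      refine h₁.append_overlap (L₂ := [u]) ?_ (List.cons_ne_nil _ _)
      refine isReduced_cons_cons.2 ⟨fun ha => ?_, h₂⟩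
      obtain ⟨a', b'⟩ := u
      simp_all

theorem exists_toWord_mul_eq (p g : FreeGroup α) :
    ∃ A B C, p.toWord = A ++ invRev B ∧ g.toWord = B ++ C ∧ (p * g).toWord = A ++ C := by
  rw [toWord_mul]
  exact isReduced_toWord.exists_reduce_append_eq isReduced_toWord

theorem exists_toWord_eq_of_norm_mul_eq {p g : FreeGroup α} (h : (p * g).norm = p.norm) :
    ∃ C : List (α × Bool), C.length ≤ p.norm ∧ g.norm = 2 * C.length ∧
      g.toWord = invRev (p.toWord.drop (p.norm - C.length)) ++ C := by
  obtain ⟨A, B, C, hp, hg, hpg⟩ := exists_toWord_mul_eq p g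
  have hnp : p.norm = A.length + B.length := by
    rw [norm, hp, List.length_append, invRev_length]
  have hBC : B.length = C.length := by
    have : (p * g).norm = A.length + C.length := by rw [norm, hpg, List.length_append]
    omega
  refine ⟨C, by omega, by rw [norm, hg, List.length_append]; omega, ?_⟩
  rw [hg, hp, ← hBC, show p.norm - B.length = A.length by omega, List.drop_left,
    invRev_invRev]

theorem toWord_eq_of_norm_mul_eq_of_norm_mul_inv_eq {p q g : FreeGroup α}
    (hp : (p * g).norm = p.norm) (hq : (q * g⁻¹).norm = q.norm) :
    g.toWord = invRev (p.toWord.drop (p.norm - g.norm / 2)) ++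
      q.toWord.drop (q.norm - g.norm / 2) := by
  obtain ⟨C, hCp, hgC, hg⟩ := exists_toWord_eq_of_norm_mul_eq hp
  obtain ⟨D, -, hgD, hg'⟩ := exists_toWord_eq_of_norm_mul_eq hq
  rw [norm_inv_eq] at hgD
  rw [toWord_inv, ← invRev_injective.eq_iff, invRev_invRev, invRev_append, invRev_invRev] at hg'
  obtain ⟨-, hCD⟩ := List.append_inj (hg.symm.trans hg') (by
    rw [invRev_length, invRev_length, List.length_drop, ← norm]; omega)
  rw [show g.norm / 2 = D.length by omega, hg, show C.length = D.length by omega, hCD]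

theorem encard_setOf_norm_mul_eq_le (p q : FreeGroup α) :
    {g | (p * g).norm = p.norm ∧ (q * g⁻¹).norm = q.norm}.encard ≤ p.norm + 1 := by
  have hrange : ((range (p.norm + 1) : Finset ℕ) : Set ℕ).encard = p.norm + 1 := by
    rw [Set.encard_coe_eq_coe_finsetCard, card_range]; push_cast; rfl
  rw [← hrange]
  refine Set.encard_le_encard_of_injOn (f := fun g => g.norm / 2) ?_ ?_
  · rintro g ⟨hp, -⟩
    obtain ⟨C, hC, hgC, -⟩ := exists_toWord_eq_of_norm_mul_eq hp
    simp only [coe_range, Set.mem_Iio]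
    omega
  · rintro g ⟨hp, hq⟩ g' ⟨hp', hq'⟩ hgg'
    obtain ⟨C, -, hgC, -⟩ := exists_toWord_eq_of_norm_mul_eq hp
    obtain ⟨C', -, hgC', -⟩ := exists_toWord_eq_of_norm_mul_eq hp'
    have hnorm : g.norm = g'.norm := by simp only at hgg'; omega
    rw [← toWord_inj, toWord_eq_of_norm_mul_eq_of_norm_mul_inv_eq hp hq,
      toWord_eq_of_norm_mul_eq_of_norm_mul_inv_eq hp' hq', hnorm]

end FreeGroup

theorem Finset.sum_mul_sum_filter_eq_sum_sum_card {G R : Type*} [Group G] [DecidableEq G]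
    [CommSemiring R] (S T : Finset G) (f : G → R) :
    ∑ g ∈ T, (∑ p ∈ S with p * g ∈ S, f p) * ∑ r ∈ S with r * g⁻¹ ∈ S, f r =
      ∑ p ∈ S, ∑ r ∈ S, #{g ∈ T | p * g ∈ S ∧ r * g⁻¹ ∈ S} • (f p * f r) := by
  calc _ = ∑ g ∈ T, ∑ p ∈ S, ∑ r ∈ S, if p * g ∈ S ∧ r * g⁻¹ ∈ S then f p * f r else 0 := by
        refine sum_congr rfl fun g _ => ?_
        rw [sum_mul_sum, sum_filter]
        refine sum_congr rfl fun p _ => ?_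
        rw [sum_filter]
        split_ifs <;> simp_all
    _ = _ := by
        rw [sum_comm]
        refine sum_congr rfl fun p _ => ?_
        rw [sum_comm]
        refine sum_congr rfl fun r _ => ?_
        rw [sum_ite, sum_const, sum_const_zero, add_zero]

namespace MonoidAlgebra

variable {𝕜 G : Type*} [RCLike 𝕜] [Group G] {x xs : MonoidAlgebra 𝕜 G}

theorem coeff_mul_eq_sum_conj_mul (hxs : ∀ g, xs.coeff g = conj (x.coeff g⁻¹)) (g : G) :
    (xs * x).coeff g = ∑ p ∈ x.coeff.support, conj (x.coeff p) * x.coeff (p * g) := by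
  classical
  open scoped Pointwise in
  have hsupp : xs.coeff.support ⊆ x.coeff.support⁻¹ := fun a ha => by
    simpa [Finset.mem_inv, hxs] using ha
  rw [coeff_mul_apply_left, Finsupp.sum_of_support_subset _ hsupp _ (by simp), sum_inv_index]
  simp [hxs]

theorem norm_sq_coeff_mul_le [DecidableEq G] (hxs : ∀ g, xs.coeff g = conj (x.coeff g⁻¹))
    (g : G) :
    ‖(xs * x).coeff g‖ ^ 2 ≤
      (∑ p ∈ x.coeff.support with p * g ∈ x.coeff.support, ‖x.coeff p‖ ^ 2) *
        ∑ r ∈ x.coeff.support with r * g⁻¹ ∈ x.coeff.support, ‖x.coeff r‖ ^ 2 := by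
  set S := x.coeff.support
  have hfilter : ∑ p ∈ S, conj (x.coeff p) * x.coeff (p * g) =
      ∑ p ∈ S with p * g ∈ S, conj (x.coeff p) * x.coeff (p * g) :=
    (sum_filter_of_ne fun p _ hp => by simpa [S] using right_ne_zero_of_mul hp).symm
  have hshift : ∑ p ∈ S with p * g ∈ S, ‖x.coeff (p * g)‖ ^ 2 =
      ∑ r ∈ S with r * g⁻¹ ∈ S, ‖x.coeff r‖ ^ 2 :=
    sum_nbij' (· * g) (· * g⁻¹) (by simp +contextual) (by simp +contextual) (by simp) (by simp)
      (fun _ _ => rfl)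
  rw [coeff_mul_eq_sum_conj_mul hxs, hfilter, ← hshift]
  calc ‖∑ p ∈ S with p * g ∈ S, conj (x.coeff p) * x.coeff (p * g)‖ ^ 2
      ≤ (∑ p ∈ S with p * g ∈ S, ‖x.coeff p‖ * ‖x.coeff (p * g)‖) ^ 2 := by
        gcongr
        refine (norm_sum_le _ _).trans_eq ?_
        simp
    _ ≤ _ := sum_mul_sq_le_sq_mul_sq _ _ _

theorem tsum_norm_sq_coeff_mul_le (hxs : ∀ g, xs.coeff g = conj (x.coeff g⁻¹)) (N : ℕ)
    (hN : ∀ p ∈ x.coeff.support, ∀ r ∈ x.coeff.support,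
      {g | p * g ∈ x.coeff.support ∧ r * g⁻¹ ∈ x.coeff.support}.encard ≤ N) :
    ∑' g, ‖(xs * x).coeff g‖ ^ 2 ≤ N * (∑' g, ‖x.coeff g‖ ^ 2) ^ 2 := by
  classical
  set S := x.coeff.support
  set T := (xs * x).coeff.support
  have hcard : ∀ p ∈ S, ∀ r ∈ S, #{g ∈ T | p * g ∈ S ∧ r * g⁻¹ ∈ S} ≤ N := fun p hp r hr => by
    have hsub : (↑{g ∈ T | p * g ∈ S ∧ r * g⁻¹ ∈ S} : Set G) ⊆ {g | p * g ∈ S ∧ r * g⁻¹ ∈ S} :=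
      fun g hg => (mem_filter.1 hg).2
    have := (Set.encard_le_encard hsub).trans (hN p hp r hr)
    rwa [Set.encard_coe_eq_coe_finsetCard, Nat.cast_le] at this
  rw [tsum_eq_sum (s := T) (by simp [T]), tsum_eq_sum (s := S) (by simp [S])]
  calc ∑ g ∈ T, ‖(xs * x).coeff g‖ ^ 2
      ≤ ∑ g ∈ T, (∑ p ∈ S with p * g ∈ S, ‖x.coeff p‖ ^ 2) *
          ∑ r ∈ S with r * g⁻¹ ∈ S, ‖x.coeff r‖ ^ 2 :=
        sum_le_sum fun g _ => norm_sq_coeff_mul_le hxs g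
    _ = ∑ p ∈ S, ∑ r ∈ S,
          #{g ∈ T | p * g ∈ S ∧ r * g⁻¹ ∈ S} • (‖x.coeff p‖ ^ 2 * ‖x.coeff r‖ ^ 2) :=
        sum_mul_sum_filter_eq_sum_sum_card S T _
    _ ≤ ∑ p ∈ S, ∑ r ∈ S, N * (‖x.coeff p‖ ^ 2 * ‖x.coeff r‖ ^ 2) := by
        gcongr with p hp r hr
        rw [nsmul_eq_mul]
        gcongr
        exact_mod_cast hcard p hp r hr
    _ = N * (∑ g ∈ S, ‖x.coeff g‖ ^ 2) ^ 2 := by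
        rw [sq, sum_mul_sum, mul_sum]
        simp_rw [mul_sum]

end MonoidAlgebra

/-- Lemma 3.1 of the paper (`K_{k,4} ≤ (k+1)^{1/4}`): if `x` is an element of the group
algebra `ℂ[F]` of a free group `F` supported on words of reduced length exactly `k`, and
`xs = x*` is its adjoint (`x*(g) = conj (x g⁻¹)`), then
`∑_g |(x* · x)(g)|² ≤ (k+1) · (∑_g |x g|²)²`. -/
theorem freeGroup_khintchine_four {α : Type*} [DecidableEq α] (k : ℕ)
    (x xs : MonoidAlgebra ℂ (FreeGroup α))
    (hxs : ∀ g : FreeGroup α, xs.coeff g = (starRingEnd ℂ) (x.coeff g⁻¹))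
    (hsupp : ∀ g ∈ x.coeff.support, FreeGroup.norm g = k) :
    ∑' g : FreeGroup α, ‖(xs * x).coeff g‖ ^ 2
    ≤ ((k : ℝ) + 1) * (∑' g : FreeGroup α, ‖x.coeff g‖ ^ 2) ^ 2 := by
  have hcount : ∀ p ∈ x.coeff.support, ∀ r ∈ x.coeff.support,
      {g | p * g ∈ x.coeff.support ∧ r * g⁻¹ ∈ x.coeff.support}.encard ≤ (k + 1 : ℕ) := by
    intro p hp r hr
    refine (Set.encard_le_encard ?_).trans
      ((FreeGroup.encard_setOf_norm_mul_eq_le p r).trans_eq (by rw [hsupp p hp]; push_cast; rfl))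
    rintro g ⟨hpg, hrg⟩
    exact ⟨(hsupp _ hpg).trans (hsupp p hp).symm, (hsupp _ hrg).trans (hsupp r hr).symm⟩
  exact_mod_cast MonoidAlgebra.tsum_norm_sq_coeff_mul_le hxs (k + 1) hcount
end

section
/- Let u > 0 and define f : (0,1) → ℝ by f(θ) = (1 + u − u^θ − u^{1−θ}) / (θ(1−θ)). Then f is convex on the open interval (0,1). -/
/-!
With `E x = u ^ x`, partial fractions `1 / (θ (1 - θ)) = 1 / θ + 1 / (1 - θ)` split the
function into `D E θ + D Ẽ θ`, where `Ẽ x = u ^ (1 - x)` and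
`D E θ = slope E 1 θ - slope E 0 θ` is the second divided difference `E[0, θ, 1]`.
Differentiating twice, `(D E)'' θ = 2 (R 1 / (1 - θ) ^ 3 + R 0 / θ ^ 3)`, where `R b` is the
remainder of the second-order Taylor expansion of `E` at `θ` evaluated at `b`. Since `exp` lies
above its cubic Taylor polynomials, `R b ≥ E''' θ (b - θ) ^ 3 / 6`, and the resulting lower
bounds `± E''' θ / 3` of the two terms cancel.
-/

open Real Set

theorem Real.cubic_le_exp (x : ℝ) : 1 + x + x ^ 2 / 2 + x ^ 3 / 6 ≤ exp x := by
  let g : ℝ → ℝ := fun y ↦ exp y - (1 + y + y ^ 2 / 2 + y ^ 3 / 6)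
  let g' : ℝ → ℝ := fun y ↦ exp y - (1 + y + y ^ 2 / 2)
  have hg (y : ℝ) : HasDerivAt g (g' y) y :=
    ((hasDerivAt_exp y).sub ((((hasDerivAt_id y).const_add 1).add
      ((hasDerivAt_pow 2 y).div_const 2)).add ((hasDerivAt_pow 3 y).div_const 6))).congr_deriv
      (by simp only [g']; ring)
  have hg' (y : ℝ) : HasDerivAt g' (exp y - (1 + y)) y :=
    ((hasDerivAt_exp y).sub (((hasDerivAt_id y).const_add 1).add
      ((hasDerivAt_pow 2 y).div_const 2))).congr_deriv (by ring)
  have hconvex : ConvexOn ℝ univ g := by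
    refine convexOn_of_hasDerivWithinAt2_nonneg convex_univ
      (fun y _ ↦ (hg y).continuousAt.continuousWithinAt) (fun y _ ↦ (hg y).hasDerivWithinAt)
      (fun y _ ↦ (hg' y).hasDerivWithinAt) fun y _ ↦ ?_
    linarith [add_one_le_exp y]
  have hmin : IsMinOn g univ 0 := by
    refine hconvex.isMinOn_of_rightDeriv_eq_zero (by simp) ?_
    rw [(hg 0).hasDerivWithinAt.derivWithin (uniqueDiffWithinAt_Ioi 0)]
    simp [g']
  simpa [g] using hmin (mem_univ x)

section DividedDifference

variable {E E' E'' : ℝ → ℝ} {b x : ℝ}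

theorem hasDerivAt_slope (hE : HasDerivAt E (E' x) x) (hx : x ≠ b) :
    HasDerivAt (slope E b) ((E' x - slope E b x) / (x - b)) x := by
  have hxb : x - b ≠ 0 := sub_ne_zero.2 hx
  rw [show slope E b = fun y ↦ (E y - E b) / (y - b) from funext (slope_def_field E b)]
  refine ((hE.sub_const (E b)).div ((hasDerivAt_id x).sub_const b) hxb).congr_deriv ?_
  simp only [id]
  field_simp

theorem hasDerivAt_deriv_slope (hE : HasDerivAt E (E' x) x) (hE' : HasDerivAt E' (E'' x) x)
    (hx : x ≠ b) :
    HasDerivAt (fun y ↦ (E' y - slope E b y) / (y - b))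
      (2 * (E b - (E x + E' x * (b - x) + E'' x * (b - x) ^ 2 / 2)) / (b - x) ^ 3) x := by
  have hxb : x - b ≠ 0 := sub_ne_zero.2 hx
  refine ((hE'.sub (hasDerivAt_slope hE hx)).div ((hasDerivAt_id x).sub_const b) hxb).congr_deriv ?_
  simp only [id, Pi.sub_apply, slope_def_field]
  field_simp
  ring

end DividedDifference

theorem convexOn_Ioo_slope_sub_slope {E E' E'' E''' : ℝ → ℝ}
    (hE : ∀ x ∈ Ioo (0 : ℝ) 1, HasDerivAt E (E' x) x)
    (hE' : ∀ x ∈ Ioo (0 : ℝ) 1, HasDerivAt E' (E'' x) x)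
    (htaylor : ∀ x ∈ Ioo (0 : ℝ) 1, ∀ b,
      E x + E' x * (b - x) + E'' x * (b - x) ^ 2 / 2 + E''' x * (b - x) ^ 3 / 6 ≤ E b) :
    ConvexOn ℝ (Ioo 0 1) fun x ↦ slope E 1 x - slope E 0 x := by
  have hderiv (x) (hx : x ∈ Ioo (0 : ℝ) 1) :=
    (hasDerivAt_slope (hE x hx) hx.2.ne).sub (hasDerivAt_slope (hE x hx) hx.1.ne')
  have hderiv2 (x) (hx : x ∈ Ioo (0 : ℝ) 1) :=
    (hasDerivAt_deriv_slope (hE x hx) (hE' x hx) hx.2.ne).sub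
      (hasDerivAt_deriv_slope (hE x hx) (hE' x hx) hx.1.ne')
  refine convexOn_of_hasDerivWithinAt2_nonneg (convex_Ioo 0 1)
    (fun x hx ↦ (hderiv x hx).continuousAt.continuousWithinAt)
    (fun x hx ↦ (hderiv x (by simpa using hx)).hasDerivWithinAt)
    (fun x hx ↦ (hderiv2 x (by simpa using hx)).hasDerivWithinAt) fun x hx ↦ ?_
  rw [interior_Ioo] at hx
  have hright : E''' x / 3 ≤ 2 * (E 1 - (E x + E' x * (1 - x) + E'' x * (1 - x) ^ 2 / 2)) /
      (1 - x) ^ 3 := by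
    rw [le_div_iff₀ (pow_pos (sub_pos.2 hx.2) 3)]
    linarith [htaylor x hx 1]
  have hleft : 2 * (E 0 - (E x + E' x * (0 - x) + E'' x * (0 - x) ^ 2 / 2)) / (0 - x) ^ 3 ≤
      E''' x / 3 := by
    rw [div_le_iff_of_neg (Odd.pow_neg (by decide) (by linarith [hx.1]))]
    linarith [htaylor x hx 0]
  linarith

theorem convexOn_Ioo_slope_sub_slope_exp (a c : ℝ) :
    ConvexOn ℝ (Ioo 0 1) fun x ↦
      slope (fun y ↦ exp (a * y + c)) 1 x - slope (fun y ↦ exp (a * y + c)) 0 x := by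
  have hexp (x : ℝ) : HasDerivAt (fun y ↦ exp (a * y + c)) (a * exp (a * x + c)) x :=
    ((((hasDerivAt_id x).const_mul a).add_const c).exp).congr_deriv (by simp only [id]; ring)
  refine convexOn_Ioo_slope_sub_slope (E' := fun y ↦ a * exp (a * y + c))
    (E'' := fun y ↦ a ^ 2 * exp (a * y + c)) (E''' := fun y ↦ a ^ 3 * exp (a * y + c))
    (fun x _ ↦ hexp x) (fun x _ ↦ ((hexp x).const_mul a).congr_deriv (by ring)) fun x _ b ↦ ?_
  have := mul_le_mul_of_nonneg_left (cubic_le_exp (a * (b - x))) (exp_pos (a * x + c)).le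
  rw [← exp_add, show a * x + c + a * (b - x) = a * b + c by ring] at this
  linear_combination this

/-- For `u > 0`, the function `θ ↦ (1 + u − u^θ − u^{1−θ}) / (θ(1−θ))` is convex
on the open interval `(0,1)`. -/
theorem convexOn_logSobolev_aux (u : ℝ) (hu : 0 < u) :
    ConvexOn ℝ (Set.Ioo (0 : ℝ) 1)
      (fun θ : ℝ => (1 + u - u ^ θ - u ^ (1 - θ)) / (θ * (1 - θ))) := by
  refine ((convexOn_Ioo_slope_sub_slope_exp (log u) 0).add
    (convexOn_Ioo_slope_sub_slope_exp (-log u) (log u))).congr fun θ hθ ↦ ?_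
  have hθ0 : θ ≠ 0 := hθ.1.ne'
  have hθ1 : 1 - θ ≠ 0 := sub_ne_zero.2 hθ.2.ne'
  have hθ1' : θ - 1 ≠ 0 := sub_ne_zero.2 hθ.2.ne
  have hpow (y : ℝ) : exp (log u * y + 0) = u ^ y := by rw [add_zero, rpow_def_of_pos hu]
  have hpow' (y : ℝ) : exp (-log u * y + log u) = u ^ (1 - y) := by
    rw [rpow_def_of_pos hu]; ring_nf
  simp only [Pi.add_apply, slope_def_field, hpow, hpow', rpow_zero, rpow_one, sub_zero, sub_self]
  field_simp
  ring
end

section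
/- Let u > 0. Then the function q ↦ (q²/(q−1)) · (1 + u − u^{1/q} − u^{1−1/q}) is monotone nondecreasing on the interval [2, ∞). -/
/-!
With `a = log u` and `θ = 1/q`, the identity `1 + u - u^θ - u^(1-θ) = (u^θ - 1) (u^(1-θ) - 1)`
and `q²/(q-1) = 1/(θ(1-θ))` turn the function into `a² g(aθ) g(a - aθ)` with `g x = (eˣ - 1)/x`.
For `a > 0`, `log g` is convex on `(0, ∞)` (its second derivative is nonnegative because
`x ≤ 2 sinh (x/2)`), so `log g(aθ) + log g(a - aθ)` decreases as `θ` moves towards `1/2`.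
Replacing `u` by `u⁻¹` only multiplies the function by `u⁻¹`, which reduces `u < 1` to `u > 1`.
-/

open Real Set

noncomputable def logExpSubOneDiv (x : ℝ) : ℝ := log ((exp x - 1) / x)

lemma sq_mul_exp_le_sq_exp_sub_one {x : ℝ} (hx : 0 ≤ x) : x ^ 2 * exp x ≤ (exp x - 1) ^ 2 := by
  have hsinh : x ≤ 2 * sinh (x / 2) := by
    linarith [self_le_sinh_iff.mpr (by positivity : 0 ≤ x / 2)]
  have hexp : exp x - 1 = 2 * sinh (x / 2) * exp (x / 2) := by
    have h1 : exp (x / 2) * exp (x / 2) = exp x := by rw [← exp_add]; ring_nf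
    have h2 : exp (-(x / 2)) * exp (x / 2) = 1 := by rw [← exp_add]; simp
    rw [sinh_eq]; linear_combination -h1 + h2
  have hsq : exp x = exp (x / 2) ^ 2 := by rw [← exp_nat_mul]; ring_nf
  rw [hexp, hsq]
  have := mul_le_mul_of_nonneg_right hsinh (exp_pos (x / 2)).le
  nlinarith [mul_nonneg hx (exp_pos (x / 2)).le]

lemma convexOn_logExpSubOneDiv : ConvexOn ℝ (Ioi 0) logExpSubOneDiv := by
  have hpos {x : ℝ} (hx : x ∈ Ioi (0 : ℝ)) : 0 < exp x - 1 :=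
    sub_pos.mpr (one_lt_exp_iff.mpr hx)
  have hf {x : ℝ} (hx : x ∈ Ioi (0 : ℝ)) :
      HasDerivAt (fun y => log (exp y - 1) - log y) (exp x / (exp x - 1) - x⁻¹) x :=
    (((hasDerivAt_exp x).sub_const 1).log (hpos hx).ne').sub (hasDerivAt_log (ne_of_gt hx))
  have hf' {x : ℝ} (hx : x ∈ Ioi (0 : ℝ)) :
      HasDerivAt (fun y => exp y / (exp y - 1) - y⁻¹) ((x ^ 2)⁻¹ - exp x / (exp x - 1) ^ 2) x := by
    refine (((hasDerivAt_exp x).div ((hasDerivAt_exp x).sub_const 1) (hpos hx).ne').sub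
      (hasDerivAt_inv (ne_of_gt hx))).congr_deriv ?_
    ring
  have hconv : ConvexOn ℝ (Ioi 0) fun y => log (exp y - 1) - log y := by
    refine convexOn_of_hasDerivWithinAt2_nonneg (f' := fun x => exp x / (exp x - 1) - x⁻¹)
      (f'' := fun x => (x ^ 2)⁻¹ - exp x / (exp x - 1) ^ 2) (convex_Ioi 0)
      (fun x hx => (hf hx).continuousAt.continuousWithinAt) ?_ ?_ ?_ <;>
      rw [interior_Ioi]
    · exact fun x hx => (hf hx).hasDerivWithinAt
    · exact fun x hx => (hf' hx).hasDerivWithinAt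
    · intro x hx
      have hx' : 0 < x := hx
      rw [sub_nonneg, div_le_iff₀ (pow_pos (hpos hx) 2), inv_mul_eq_div,
        le_div_iff₀ (pow_pos hx' 2), mul_comm]
      exact sq_mul_exp_le_sq_exp_sub_one hx'.le
  refine hconv.congr fun x hx => ?_
  simp only [logExpSubOneDiv, log_div (hpos hx).ne' (ne_of_gt hx)]

lemma ConvexOn.map_add_map_sub_le {s : Set ℝ} {f : ℝ → ℝ} (hf : ConvexOn ℝ s f) {c x y : ℝ}
    (hx : x ∈ s) (hcx : c - x ∈ s) (hxy : x ≤ y) (hyc : y ≤ c - x) :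
    f y + f (c - y) ≤ f x + f (c - x) := by
  obtain ⟨a, b, ha, hb, hab, rfl⟩ : y ∈ segment ℝ x (c - x) := by
    rw [segment_eq_Icc (hxy.trans hyc)]; exact ⟨hxy, hyc⟩
  have hmirror : c - (a • x + b • (c - x)) = b • x + a • (c - x) := by
    simp only [smul_eq_mul]; linear_combination -c * hab
  rw [hmirror]
  have h₁ := hf.2 hx hcx ha hb hab
  have h₂ := hf.2 hx hcx hb ha (by linarith)
  simp only [smul_eq_mul] at h₁ h₂ ⊢
  linear_combination h₁ + h₂ + (f x + f (c - x)) * hab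

lemma one_add_sub_rpow_sub_rpow_eq_sub_one_mul_sub_one {u : ℝ} (hu : 0 < u) (θ : ℝ) :
    1 + u - u ^ θ - u ^ (1 - θ) = (u ^ θ - 1) * (u ^ (1 - θ) - 1) := by
  have : u ^ θ * u ^ (1 - θ) = u := by rw [← rpow_add hu]; simp
  linear_combination -this

lemma one_add_sub_rpow_sub_rpow_eq_mul_inv {u : ℝ} (hu : 0 < u) (θ : ℝ) :
    1 + u - u ^ θ - u ^ (1 - θ) = u * (1 + u⁻¹ - u⁻¹ ^ θ - u⁻¹ ^ (1 - θ)) := by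
  have h₁ : u * u⁻¹ ^ θ = u ^ (1 - θ) := by
    rw [inv_rpow hu.le, rpow_sub hu, rpow_one, div_eq_mul_inv]
  have h₂ : u * u⁻¹ ^ (1 - θ) = u ^ θ := by
    rw [inv_rpow hu.le, rpow_sub hu, rpow_one, inv_div, mul_div_cancel₀ _ hu.ne']
  rw [mul_sub, mul_sub, h₁, h₂, mul_add, mul_inv_cancel₀ hu.ne']
  ring

lemma exp_logExpSubOneDiv {x : ℝ} (hx : 0 < x) : exp (logExpSubOneDiv x) = (exp x - 1) / x :=
  exp_log (div_pos (sub_pos.mpr (one_lt_exp_iff.mpr hx)) hx)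

lemma sq_div_sub_one_mul_eq_sq_log_mul_exp {u q : ℝ} (hu : 1 < u) (hq : 1 < q) :
    q ^ 2 / (q - 1) * (1 + u - u ^ (1 / q) - u ^ (1 - 1 / q)) =
      log u ^ 2 * exp (logExpSubOneDiv (log u / q) + logExpSubOneDiv (log u - log u / q)) := by
  have ha : 0 < log u := log_pos hu
  have hq₀ : 0 < q := by linarith
  have haq : log u / q < log u := div_lt_self ha hq
  rw [one_add_sub_rpow_sub_rpow_eq_sub_one_mul_sub_one (by linarith),
    rpow_def_of_pos (by linarith), rpow_def_of_pos (by linarith), exp_add,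
    exp_logExpSubOneDiv (div_pos ha hq₀), exp_logExpSubOneDiv (sub_pos.mpr haq), mul_one_div,
    mul_sub, mul_one]
  have : q - 1 ≠ 0 := by linarith
  field_simp

lemma monotoneOn_logSobolev_aux_of_one_lt {u : ℝ} (hu : 1 < u) :
    MonotoneOn (fun q : ℝ => q ^ 2 / (q - 1) * (1 + u - u ^ (1 / q) - u ^ (1 - 1 / q)))
      (Ici 2) := by
  intro q (hq : 2 ≤ q) q' (hq' : 2 ≤ q') hqq'
  have ha : 0 < log u := log_pos hu
  dsimp only
  rw [sq_div_sub_one_mul_eq_sq_log_mul_exp hu (by linarith),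
    sq_div_sub_one_mul_eq_sq_log_mul_exp hu (by linarith)]
  gcongr ?_ * exp ?_
  have h₁ : log u / q ≤ log u / 2 := div_le_div_of_nonneg_left ha.le two_pos hq
  have h₂ : log u / q' ≤ log u / 2 := div_le_div_of_nonneg_left ha.le two_pos hq'
  exact convexOn_logExpSubOneDiv.map_add_map_sub_le (div_pos ha (by linarith))
    (sub_pos.mpr (div_lt_self ha (by linarith)))
    (div_le_div_of_nonneg_left ha.le (by linarith) hqq') (by linarith)

/-- For `u > 0`, the function `q ↦ (q²/(q−1)) · (1 + u − u^{1/q} − u^{1−1/q})` is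
monotone nondecreasing on `[2, ∞)`. -/
theorem monotoneOn_logSobolev_aux (u : ℝ) (hu : 0 < u) :
    MonotoneOn
      (fun q : ℝ => q ^ 2 / (q - 1) * (1 + u - u ^ (1 / q) - u ^ (1 - 1 / q)))
      (Set.Ici (2 : ℝ)) := by
  rcases lt_trichotomy u 1 with hu₁ | rfl | hu₁
  · have hmono := monotoneOn_logSobolev_aux_of_one_lt (one_lt_inv_iff₀.mpr ⟨hu, hu₁⟩)
    intro q hq q' hq' hqq'
    simp only [one_add_sub_rpow_sub_rpow_eq_mul_inv hu, mul_left_comm _ u]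
    exact mul_le_mul_of_nonneg_left (hmono hq hq' hqq') hu.le
  · intro q _ q' _ _
    simp
  · exact monotoneOn_logSobolev_aux_of_one_lt hu₁
end

section
/- Let G be a type with a distinguished element e, let ψ : G → ℝ satisfy ψ(e) = 0 and ψ(g) ≥ 1 for all g ≠ e, and suppose there exist constants C > 0 and ρ > 1 such that for every R > 0 the set {g ∈ G : ψ(g) ≤ R} is finite with cardinality at most C·ρ^R. Then for every t ≥ log ρ, one has ∑_{g ≠ e} exp(−2t·ψ(g)) ≤ 2C·exp(−(2t − log ρ)). -/
/-!
Layer-cake argument. With `s = 2t`, each term is `e^{-sψ(g)} = ∫_{ψ(g)}^∞ s e^{-su} du`, so by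
Tonelli the sum equals `∫ N(u) s e^{-su} du` with `N(u) = #{g ≠ e : ψ(g) < u}`. Since `ψ ≥ 1` off
`e`, `N` vanishes on `u ≤ 1`, and `N(u) ≤ Cρ^u` beyond. Hence the sum is at most
`C ∫_1^∞ s e^{-(s - log ρ)u} du = C s/(s - log ρ) · e^{-(s - log ρ)}`, and `s ≤ 2(s - log ρ)`
because `t ≥ log ρ`.
-/

open MeasureTheory Set
open scoped ENNReal

lemma lintegral_Ioi_mul_exp_neg_mul {s : ℝ} (hs : 0 < s) (a : ℝ) :
    ∫⁻ u in Ioi a, ENNReal.ofReal (s * Real.exp (-(s * u)))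
      = ENNReal.ofReal (Real.exp (-(s * a))) := by
  have hint : IntegrableOn (fun u => Real.exp (-s * u)) (Ioi a) :=
    integrableOn_exp_mul_Ioi (neg_neg_of_pos hs) a
  simp_rw [← neg_mul]
  rw [← ofReal_integral_eq_lintegral_ofReal (hint.const_mul s)
      (ae_of_all _ fun u => by positivity), integral_const_mul,
    integral_exp_mul_Ioi (neg_neg_of_pos hs)]
  congr 1
  field_simp

lemma lintegral_Ioi_rpow_mul_exp_neg_mul {ρ s : ℝ} (hρ : 0 < ρ) (hs : 0 < s)
    (hρs : Real.log ρ < s) (a : ℝ) :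
    ∫⁻ u in Ioi a, ENNReal.ofReal (ρ ^ u) * ENNReal.ofReal (s * Real.exp (-(s * u)))
      = ENNReal.ofReal (s / (s - Real.log ρ) * Real.exp (-((s - Real.log ρ) * a))) := by
  have hx : 0 < s - Real.log ρ := sub_pos.2 hρs
  have hsplit : ∀ u, ENNReal.ofReal (ρ ^ u) * ENNReal.ofReal (s * Real.exp (-(s * u)))
      = ENNReal.ofReal (s / (s - Real.log ρ))
        * ENNReal.ofReal ((s - Real.log ρ) * Real.exp (-((s - Real.log ρ) * u))) := by
    intro u
    rw [← ENNReal.ofReal_mul (by positivity), ← ENNReal.ofReal_mul (by positivity),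
      Real.rpow_def_of_pos hρ]
    congr 1
    have hexp : Real.exp (Real.log ρ * u) * Real.exp (-(s * u))
        = Real.exp (-((s - Real.log ρ) * u)) := by
      rw [← Real.exp_add]; ring_nf
    rw [← hexp]
    field_simp
  simp_rw [hsplit]
  rw [lintegral_const_mul' _ _ ENNReal.ofReal_ne_top, lintegral_Ioi_mul_exp_neg_mul hx,
    ← ENNReal.ofReal_mul (by positivity)]

lemma countable_of_finite_sublevels {G : Type*} (ψ : G → ℝ)
    (h : ∀ R : ℝ, 0 < R → {g : G | ψ g ≤ R}.Finite) : Countable G := by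
  have hcover : (univ : Set G) ⊆ ⋃ n : ℕ, {g | ψ g ≤ n + 1} := fun g _ =>
    mem_iUnion.2 ⟨⌈ψ g⌉₊,
      show ψ g ≤ _ from (Nat.le_ceil _).trans (le_add_of_nonneg_right zero_le_one)⟩
  exact countable_univ_iff.1 <|
    (countable_iUnion fun n => (h _ n.cast_add_one_pos).countable).mono hcover

lemma tsum_ofReal_exp_neg_mul_eq_lintegral {ι : Type*} [Countable ι] (φ : ι → ℝ) {s : ℝ}
    (hs : 0 < s) :
    ∑' i, ENNReal.ofReal (Real.exp (-(s * φ i)))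
      = ∫⁻ u, {i | φ i < u}.encard * ENNReal.ofReal (s * Real.exp (-(s * u))) := by
  set f : ℝ → ℝ≥0∞ := fun u => ENNReal.ofReal (s * Real.exp (-(s * u)))
  have hf : Measurable f := by fun_prop
  calc ∑' i, ENNReal.ofReal (Real.exp (-(s * φ i)))
      = ∑' i, ∫⁻ u, (Ioi (φ i)).indicator f u := by
        simp only [lintegral_indicator measurableSet_Ioi, f, lintegral_Ioi_mul_exp_neg_mul hs]
    _ = ∫⁻ u, ∑' i, (Ioi (φ i)).indicator f u :=
        (lintegral_tsum fun i => (hf.indicator measurableSet_Ioi).aemeasurable).symm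
    _ = ∫⁻ u, {i | φ i < u}.encard * f u := by
        congr 1 with u
        rw [← ENNReal.tsum_set_const, tsum_subtype {i | φ i < u} fun _ => f u]
        rfl

lemma tsum_ofReal_exp_neg_mul_le_setLIntegral {ι : Type*} [Countable ι] (φ : ι → ℝ) {s : ℝ}
    (hs : 0 < s) {a : ℝ} (hφ : ∀ i, a ≤ φ i) {B : ℝ → ℝ≥0∞}
    (hB : ∀ u ∈ Ioi a, ({i | φ i < u}.encard : ℝ≥0∞) ≤ B u) :
    ∑' i, ENNReal.ofReal (Real.exp (-(s * φ i)))
      ≤ ∫⁻ u in Ioi a, B u * ENNReal.ofReal (s * Real.exp (-(s * u))) := by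
  have hsupport : (fun u => ({i | φ i < u}.encard : ℝ≥0∞)
      * ENNReal.ofReal (s * Real.exp (-(s * u)))).support ⊆ Ioi a := by
    refine Function.support_subset_iff'.2 fun u hu => ?_
    suffices {i | φ i < u} = ∅ by simp [this]
    exact eq_empty_of_forall_notMem fun i hi => hu <| (hφ i).trans_lt hi
  rw [tsum_ofReal_exp_neg_mul_eq_lintegral φ hs, ← setLIntegral_eq_of_support_subset hsupport]
  exact setLIntegral_mono' measurableSet_Ioi fun u hu => by gcongr; exact hB u hu

lemma encard_subtype_setOf_lt_le {α : Type*} {p : α → Prop} (φ : α → ℝ) (u : ℝ) :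
    {a : Subtype p | φ a < u}.encard ≤ {a | φ a ≤ u}.encard := by
  rw [← Subtype.val_injective.injOn.encard_image]
  gcongr
  rintro _ ⟨a, ha, rfl⟩
  exact le_of_lt (show φ a < u from ha)

lemma Set.Finite.coe_encard_le_ofReal {α : Type*} {s : Set α} (hs : s.Finite) {r : ℝ}
    (h : (s.ncard : ℝ) ≤ r) : (s.encard : ℝ≥0∞) ≤ ENNReal.ofReal r := by
  rw [← hs.cast_ncard_eq, ENat.toENNReal_coe, ← ENNReal.ofReal_natCast]
  exact ENNReal.ofReal_le_ofReal h

theorem exp_growth_summation_estimate_general {G : Type*} (e : G) (ψ : G → ℝ)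
    (hψ : ∀ g : G, g ≠ e → 1 ≤ ψ g)
    (C ρ : ℝ) (hC : 0 < C) (hρ : 1 < ρ)
    (hgrowth : ∀ R : ℝ, 0 < R →
      {g : G | ψ g ≤ R}.Finite ∧ ({g : G | ψ g ≤ R}.ncard : ℝ) ≤ C * ρ ^ R)
    (t : ℝ) (ht : Real.log ρ ≤ t) :
    ∑' g : {g : G // g ≠ e}, ENNReal.ofReal (Real.exp (-(2 * t * ψ g)))
    ≤ ENNReal.ofReal (2 * C * Real.exp (-(2 * t - Real.log ρ))) := by
  have hlogρ : 0 < Real.log ρ := Real.log_pos hρ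
  have : Countable G := countable_of_finite_sublevels ψ fun R hR => (hgrowth R hR).1
  have hcount : ∀ u ∈ Ioi (1 : ℝ), ({g : {g : G // g ≠ e} | ψ g < u}.encard : ℝ≥0∞)
      ≤ ENNReal.ofReal C * ENNReal.ofReal (ρ ^ u) := fun u hu => by
    obtain ⟨hfin, hcard⟩ := hgrowth u (zero_lt_one.trans hu)
    rw [← ENNReal.ofReal_mul hC.le]
    exact (ENat.toENNReal_le.2 (encard_subtype_setOf_lt_le ψ u)).trans
      (hfin.coe_encard_le_ofReal hcard)
  have hratio : 2 * t / (2 * t - Real.log ρ) ≤ 2 := by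
    rw [div_le_iff₀ (by linarith)]; linarith
  calc ∑' g : {g : G // g ≠ e}, ENNReal.ofReal (Real.exp (-(2 * t * ψ g)))
      ≤ ∫⁻ u in Ioi 1, ENNReal.ofReal C * ENNReal.ofReal (ρ ^ u)
          * ENNReal.ofReal (2 * t * Real.exp (-(2 * t * u))) :=
        tsum_ofReal_exp_neg_mul_le_setLIntegral (fun g : {g : G // g ≠ e} => ψ g) (by linarith)
          (fun g => hψ g g.2) hcount
    _ = ENNReal.ofReal (C * (2 * t / (2 * t - Real.log ρ)
          * Real.exp (-((2 * t - Real.log ρ) * 1)))) := by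
        simp_rw [mul_assoc (ENNReal.ofReal C)]
        rw [lintegral_const_mul' _ _ ENNReal.ofReal_ne_top,
          lintegral_Ioi_rpow_mul_exp_neg_mul (by linarith) (by linarith) (by linarith),
          ENNReal.ofReal_mul hC.le]
    _ ≤ ENNReal.ofReal (2 * C * Real.exp (-(2 * t - Real.log ρ))) := by
        rw [mul_one, ← mul_assoc, mul_comm 2 C]
        gcongr

/-- Combinatorial core of the final Proposition: if `ψ e = 0`, `ψ g ≥ 1` for `g ≠ e`, and
`|{g : ψ g ≤ R}| ≤ C ρ^R` for all `R > 0`, then for `t ≥ log ρ`,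
`∑_{g ≠ e} exp(−2t·ψ(g)) ≤ 2C·exp(−(2t − log ρ))` (the possibly infinite sum taken
in `ℝ≥0∞`). -/
theorem exp_growth_summation_estimate {G : Type*} (e : G) (ψ : G → ℝ)
    (hψe : ψ e = 0) (hψ : ∀ g : G, g ≠ e → 1 ≤ ψ g)
    (C ρ : ℝ) (hC : 0 < C) (hρ : 1 < ρ)
    (hgrowth : ∀ R : ℝ, 0 < R →
      {g : G | ψ g ≤ R}.Finite ∧ ({g : G | ψ g ≤ R}.ncard : ℝ) ≤ C * ρ ^ R)
    (t : ℝ) (ht : Real.log ρ ≤ t) :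
    ∑' g : {g : G // g ≠ e}, ENNReal.ofReal (Real.exp (-(2 * t * ψ g)))
    ≤ ENNReal.ofReal (2 * C * Real.exp (-(2 * t - Real.log ρ))) :=
  exp_growth_summation_estimate_general e ψ hψ C ρ hC hρ hgrowth t ht
end
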